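/- arXiv:1302.2441 — 4 statements merged into one kernel-verified Lean document; each statement's English description precedes it below -/
import Mathlib

section
/- The map φ_n sending a type-A Shi tableau T = (k_{i,j})_{1≤i≤j≤n} of size (n,m) to its tuple of row sums (λ_1, …, λ_n), where λ_i = Σ_{j=i}^{n} k_{i,j}, is a bijection from the set of type-A Shi tableaux of size (n,m) onto P^m_n. -/
/-- `lam` (indexed `1,…,n`) is a type-A partition of size `(n,m)`:
weakly decreasing with `0 ≤ lam i ≤ m (n - i + 1)` for `1 ≤ i ≤ n`. -/
def IsTypeAPartition (n m : ℕ) (lam : ℕ → ℤ) : Prop :=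
  (∀ i : ℕ, 1 ≤ i → i ≤ n → 0 ≤ lam i ∧ lam i ≤ (m : ℤ) * ((n : ℤ) - (i : ℤ) + 1)) ∧
  (∀ i : ℕ, 1 ≤ i → i < n → lam (i + 1) ≤ lam i)

/-- `K` satisfies, on the triangular domain `1 ≤ i ≤ j ≤ n`, the defining recursion of
the entries `k_{i,j}(lam)`:
`k_{i,j} = min(m, ⌈(lam_i − Σ_{l=j+1}^n k_{i,l} + Σ_{l=i+1}^j k_{l,j})/(j−i+1)⌉)`.
(This recursion is well founded and determines `K` uniquely on the domain.) -/
def TableauRec (n m : ℕ) (lam : ℕ → ℤ) (K : ℕ → ℕ → ℤ) : Prop :=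
  ∀ i j : ℕ, 1 ≤ i → i ≤ j → j ≤ n →
    K i j = min (m : ℤ)
      ⌈(((lam i - ∑ l ∈ Finset.Icc (j + 1) n, K i l
          + ∑ l ∈ Finset.Icc (i + 1) j, K l j : ℤ) : ℚ)
        / ((j : ℚ) - (i : ℚ) + 1))⌉

/-- A type-A Shi tableau of size `(n,m)`: a triangular family `(k_{i,j})_{1 ≤ i ≤ j ≤ n}`
of integers with `0 ≤ k_{i,j} ≤ m` satisfying the Shi conditions: for all
`1 ≤ i ≤ l < j ≤ n`, if `k_{i,l} + k_{l+1,j} < m` then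
`k_{i,j} − (k_{i,l} + k_{l+1,j}) ∈ {0,1}`, and if `k_{i,l} + k_{l+1,j} ≥ m`
then `k_{i,j} = m`. -/
def IsShiTableau (n m : ℕ) (K : ℕ → ℕ → ℤ) : Prop :=
  (∀ i j : ℕ, 1 ≤ i → i ≤ j → j ≤ n → 0 ≤ K i j ∧ K i j ≤ (m : ℤ)) ∧
  ∀ i l j : ℕ, 1 ≤ i → i ≤ l → l < j → j ≤ n →
    (K i l + K (l + 1) j < (m : ℤ) →
      K i j - (K i l + K (l + 1) j) = 0 ∨ K i j - (K i l + K (l + 1) j) = 1) ∧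
    ((m : ℤ) ≤ K i l + K (l + 1) j → K i j = (m : ℤ))

/-- The set of type-A Shi tableaux of size `(n,m)`, normalized to vanish outside the
triangular domain `1 ≤ i ≤ j ≤ n`. -/
def ShiSet (n m : ℕ) : Set (ℕ → ℕ → ℤ) :=
  {K | IsShiTableau n m K ∧ ∀ i j : ℕ, ¬(1 ≤ i ∧ i ≤ j ∧ j ≤ n) → K i j = 0}

/-- The set `P^m_n` of type-A partitions of size `(n,m)`, normalized to vanish outside
the index range `1 ≤ i ≤ n`. -/
def PartSet (n m : ℕ) : Set (ℕ → ℤ) :=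
  {lam | IsTypeAPartition n m lam ∧ ∀ i : ℕ, ¬(1 ≤ i ∧ i ≤ n) → lam i = 0}


section ShiAux

open Finset

private lemma sum_Icc_split' (f : ℕ → ℤ) (i j n : ℕ) (hij : i ≤ j + 1) (hjn : j ≤ n) :
    ∑ l ∈ Icc i n, f l = (∑ l ∈ Icc i j, f l) + ∑ l ∈ Icc (j + 1) n, f l := by
  rw [← Finset.Ico_add_one_right_eq_Icc, ← Finset.Ico_add_one_right_eq_Icc, ← Finset.Ico_add_one_right_eq_Icc,
    Finset.sum_Ico_consecutive f hij (by omega)]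

private lemma sum_Icc_bot' (f : ℕ → ℤ) (a b : ℕ) (h : a ≤ b) :
    ∑ l ∈ Icc a b, f l = f a + ∑ l ∈ Icc (a + 1) b, f l := by
  rw [← Finset.Ico_add_one_right_eq_Icc, ← Finset.Ico_add_one_right_eq_Icc]
  exact Finset.sum_eq_sum_Ico_succ_bot (by omega) f

private lemma sum_Icc_shift' (g : ℕ → ℤ) (i j : ℕ) :
    ∑ l ∈ Icc (i + 1) (j + 1), g l = ∑ l ∈ Icc i j, g (l + 1) := by
  rw [show Icc (i+1) (j+1) = (Icc i j).map ⟨fun x => x + 1, fun a b h => by simpa using h⟩ by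
    ext x; simp only [Finset.mem_map, Finset.mem_Icc, Function.Embedding.coeFn_mk]
    constructor
    · rintro ⟨h1, h2⟩; exact ⟨x - 1, by omega, by show x - 1 + 1 = x; omega⟩
    · rintro ⟨y, hy, rfl⟩; show i + 1 ≤ y + 1 ∧ y + 1 ≤ j + 1; omega]
  rw [Finset.sum_map]; rfl

/-- Shi tableau conditions on the sub-triangle `a ≤ i ≤ j ≤ n`. -/
def ShiOn (a n m : ℕ) (K : ℕ → ℕ → ℤ) : Prop :=
  (∀ i j : ℕ, a ≤ i → i ≤ j → j ≤ n → 0 ≤ K i j ∧ K i j ≤ (m : ℤ)) ∧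
  ∀ i l j : ℕ, a ≤ i → i ≤ l → l < j → j ≤ n →
    (K i l + K (l + 1) j < (m : ℤ) →
      K i j - (K i l + K (l + 1) j) = 0 ∨ K i j - (K i l + K (l + 1) j) = 1) ∧
    ((m : ℤ) ≤ K i l + K (l + 1) j → K i j = (m : ℤ))

/-- The increment lemma: if the top-row sum of a Shi (sub)tableau is not maximal,
some single top-row entry can be incremented keeping the Shi property. -/
private lemma shi_increment (a n m : ℕ) (ha : 1 ≤ a) (han : a ≤ n) (K : ℕ → ℕ → ℤ)
    (hK : ShiOn a n m K) (hz : ∀ i j : ℕ, ¬(a ≤ i ∧ i ≤ j ∧ j ≤ n) → K i j = 0)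
    (hs : ∑ j ∈ Finset.Icc a n, K a j < (m : ℤ) * ((n : ℤ) - a + 1)) :
    ∃ K₂ : ℕ → ℕ → ℤ, ShiOn a n m K₂ ∧ (∀ i j : ℕ, ¬(a ≤ i ∧ i ≤ j ∧ j ≤ n) → K₂ i j = 0) ∧
      (∀ i j : ℕ, i ≠ a → K₂ i j = K i j) ∧
      ∑ j ∈ Finset.Icc a n, K₂ a j = (∑ j ∈ Finset.Icc a n, K a j) + 1 := by
  classical
  have hbnd := hK.1
  have haa : K a a < (m : ℤ) := by
    by_contra hcon
    push_neg at hcon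
    have hall : ∀ j ∈ Finset.Icc a n, K a j = (m : ℤ) := by
      intro j hj
      rw [Finset.mem_Icc] at hj
      rcases eq_or_lt_of_le hj.1 with rfl | hlt
      · have := (hbnd a a le_rfl le_rfl hj.2).2; omega
      · exact (hK.2 a a j le_rfl le_rfl hlt hj.2).2
          (by have h0 := (hbnd (a+1) j (by omega) (by omega) hj.2).1; omega)
    rw [Finset.sum_congr rfl hall, Finset.sum_const, Nat.card_Icc, nsmul_eq_mul] at hs
    have hc : ((n + 1 - a : ℕ) : ℤ) = (n : ℤ) - a + 1 := by omega
    rw [hc, mul_comm] at hs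
    exact lt_irrefl _ hs
  set C := (Finset.Icc a n).filter
    (fun q => K a q < (m : ℤ) ∧ ∀ l : ℕ, a ≤ l → l < q → K a l + K (l+1) q = K a q) with hCdef
  have hane : a ∈ C := Finset.mem_filter.2
    ⟨Finset.mem_Icc.2 ⟨le_rfl, han⟩, haa, fun l h1 h2 => absurd h2 (by omega)⟩
  have hCne : C.Nonempty := ⟨a, hane⟩
  set q := C.max' hCne with hqdef
  have hqmem := Finset.mem_filter.1 (C.max'_mem hCne)
  rw [← hqdef] at hqmem
  obtain ⟨hqIcc', hqm, hqP⟩ := hqmem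
  rw [Finset.mem_Icc] at hqIcc'
  obtain ⟨haq, hqn⟩ := hqIcc'
  have hqmax : ∀ j, a ≤ j → j ≤ n → (K a j < (m : ℤ) ∧
      ∀ l : ℕ, a ≤ l → l < j → K a l + K (l+1) j = K a j) → j ≤ q := fun j h1 h2 h3 =>
    Finset.le_max' C j (Finset.mem_filter.2 ⟨Finset.mem_Icc.2 ⟨h1, h2⟩, h3⟩)
  have key : ∀ j, q < j → j ≤ n → K a q + K (q+1) j < (m : ℤ) →
      K a j = K a q + K (q+1) j + 1 := by
    intro j
    induction j using Nat.strong_induction_on with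
    | _ j IH =>
      intro hqj hjn hsm
      have haj : a ≤ j := by omega
      have t1 := hK.2 a q j le_rfl haq hqj hjn
      rcases t1.1 hsm with hd | hd
      · exfalso
        have hKaj : K a j = K a q + K (q+1) j := by omega
        have hKajm : K a j < (m : ℤ) := by omega
        have hPj : K a j < (m : ℤ) ∧ ∀ l : ℕ, a ≤ l → l < j → K a l + K (l+1) j = K a j := by
          refine ⟨hKajm, ?_⟩
          intro l hal hlj
          rcases lt_trichotomy l q with hlq | rfl | hql
          · have h1 : K a l + K (l+1) q = K a q := hqP l hal hlq
            have t2 := hK.2 (l+1) q j (by omega) (by omega) hqj hjn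
            have hKl1j : K (l+1) q + K (q+1) j ≤ K (l+1) j := by
              rcases lt_or_ge (K (l+1) q + K (q+1) j) (m : ℤ) with hc | hc
              · rcases t2.1 hc with h | h <;> omega
              · exfalso
                have h3 : K (l+1) j = (m : ℤ) := t2.2 hc
                have h4 : 0 ≤ K a l := (hbnd a l le_rfl hal (by omega)).1
                have t3 := (hK.2 a l j le_rfl hal (by omega) hjn).2 (by omega)
                omega
            have t3 := hK.2 a l j le_rfl hal (by omega) hjn
            have hub : K a l + K (l+1) j ≤ K a j := by
              rcases lt_or_ge (K a l + K (l+1) j) (m : ℤ) with hc | hc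
              · rcases t3.1 hc with h | h <;> omega
              · exfalso; have := t3.2 hc; omega
            omega
          · omega
          · by_contra hne
            have t3 := hK.2 a l j le_rfl hal hlj hjn
            have h5 : K a l + K (l+1) j = K a j - 1 := by
              rcases lt_or_ge (K a l + K (l+1) j) (m : ℤ) with hc | hc
              · rcases t3.1 hc with h | h <;> omega
              · exfalso; have := t3.2 hc; omega
            have t4 := hK.2 a q l le_rfl haq hql (by omega)
            have h6 : K a q + K (q+1) l ≤ K a l := by
              rcases lt_or_ge (K a q + K (q+1) l) (m : ℤ) with hc | hc
              · rcases t4.1 hc with h | h <;> omega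
              · exfalso
                have := t4.2 hc
                have h0 := (hbnd (l+1) j (by omega) (by omega) hjn).1
                omega
            have t5 := hK.2 (q+1) l j (by omega) (by omega) hlj hjn
            have hbq := (hbnd (q+1) j (by omega) (by omega) hjn).2
            have h7 : K (q+1) j - 1 ≤ K (q+1) l + K (l+1) j := by
              rcases lt_or_ge (K (q+1) l + K (l+1) j) (m : ℤ) with hc | hc
              · rcases t5.1 hc with h | h <;> omega
              · omega
            have h8 : K a l = K a q + K (q+1) l := by omega
            have h9 : K a l < (m : ℤ) := by
              have h0 := (hbnd (l+1) j (by omega) (by omega) hjn).1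
              omega
            have := IH l hlj hql (by omega) (by omega)
            omega
        exact absurd (hqmax j haj hjn hPj) (by omega)
      · omega
  set K₂ : ℕ → ℕ → ℤ := fun i j => if i = a ∧ j = q then K i j + 1 else K i j with hK₂def
  have e1 : ∀ i j, ¬(i = a ∧ j = q) → K₂ i j = K i j := by
    intro i j h; simp only [hK₂def]; rw [if_neg h]
  have e2 : K₂ a q = K a q + 1 := by simp [hK₂def]
  have e3 : ∀ j, K₂ a j = K a j + (if j = q then 1 else 0) := by
    intro j
    by_cases h : j = q
    · subst h; rw [e2]; simp
    · rw [e1 a j (fun hc => h hc.2)]; simp [h]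
  refine ⟨K₂, ⟨?_, ?_⟩, ?_, ?_, ?_⟩
  · intro i j h1 h2 h3
    by_cases h : i = a ∧ j = q
    · rw [h.1, h.2, e2]
      have := (hbnd a q le_rfl haq hqn).1
      omega
    · rw [e1 _ _ h]; exact hbnd i j h1 h2 h3
  · intro i l j h1 h2 h3 h4
    by_cases hA : i = a ∧ j = q
    · rw [hA.1] at h2
      rw [hA.2] at h3
      rw [hA.1, hA.2]
      rw [e2, e1 a l (by rintro ⟨-, h7⟩; omega), e1 (l+1) q (by rintro ⟨h7, -⟩; omega)]
      have h5 : K a l + K (l+1) q = K a q := hqP l h2 h3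
      constructor
      · intro h6; right; omega
      · intro h6; exfalso; omega
    · by_cases hB : i = a ∧ l = q
      · rw [hB.1] at hA ⊢
        rw [hB.2] at h3 ⊢
        rw [e2, e1 a j (fun hc => hA hc), e1 (q+1) j (by rintro ⟨h7, -⟩; omega)]
        constructor
        · intro h6
          have h8 := key j h3 h4 (by omega)
          left; omega
        · intro h6
          rcases lt_or_ge (K a q + K (q+1) j) (m : ℤ) with hc | hc
          · have := key j h3 h4 hc; omega
          · exact (hK.2 a q j le_rfl haq h3 h4).2 hc
      · rw [e1 i j hA, e1 i l hB, e1 (l+1) j (by rintro ⟨h7, -⟩; omega)]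
        exact hK.2 i l j h1 h2 h3 h4
  · intro i j h
    have hne : ¬(i = a ∧ j = q) := fun hc => h (by rw [hc.1, hc.2]; exact ⟨le_rfl, haq, hqn⟩)
    rw [e1 _ _ hne]; exact hz i j h
  · intro i j hia; exact e1 i j (fun hc => hia hc.1)
  · rw [Finset.sum_congr rfl (fun j _ => e3 j), Finset.sum_add_distrib]
    congr 1
    rw [Finset.sum_ite_eq' (Finset.Icc a n) q (fun _ => (1 : ℤ))]
    rw [if_pos (Finset.mem_Icc.2 ⟨haq, hqn⟩)]

private lemma shi_increment_many (a n m : ℕ) (ha : 1 ≤ a) (han : a ≤ n) :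
    ∀ c : ℕ, ∀ K : ℕ → ℕ → ℤ, ShiOn a n m K →
      (∀ i j : ℕ, ¬(a ≤ i ∧ i ≤ j ∧ j ≤ n) → K i j = 0) →
      (∑ j ∈ Icc a n, K a j) + (c : ℤ) ≤ (m : ℤ) * ((n : ℤ) - a + 1) →
      ∃ K₂ : ℕ → ℕ → ℤ, ShiOn a n m K₂ ∧ (∀ i j : ℕ, ¬(a ≤ i ∧ i ≤ j ∧ j ≤ n) → K₂ i j = 0) ∧
        (∀ i j : ℕ, i ≠ a → K₂ i j = K i j) ∧
        ∑ j ∈ Icc a n, K₂ a j = (∑ j ∈ Icc a n, K a j) + (c : ℤ) := by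
  intro c
  induction c with
  | zero => intro K h1 h2 _; exact ⟨K, h1, h2, fun _ _ _ => rfl, by simp⟩
  | succ c IH =>
    intro K h1 h2 h3
    have hc0 : (0 : ℤ) ≤ (c : ℤ) := Int.natCast_nonneg c
    have h3' : ∑ j ∈ Icc a n, K a j < (m : ℤ) * ((n : ℤ) - a + 1) := by
      push_cast at h3; linarith
    obtain ⟨K₁, g1, g2, g3, g4⟩ := shi_increment a n m ha han K h1 h2 h3'
    obtain ⟨K₂, f1, f2, f3, f4⟩ := IH K₁ g1 g2 (by rw [g4]; push_cast at h3 ⊢; linarith)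
    exact ⟨K₂, f1, f2, fun i j hia => (f3 i j hia).trans (g3 i j hia),
      by rw [f4, g4]; push_cast; ring⟩

private lemma shi_exists (n m : ℕ) (lam : ℕ → ℤ)
    (hb : ∀ i : ℕ, 1 ≤ i → i ≤ n → 0 ≤ lam i ∧ lam i ≤ (m : ℤ) * ((n : ℤ) - i + 1))
    (hmono : ∀ i : ℕ, 1 ≤ i → i < n → lam (i + 1) ≤ lam i) :
    ∀ d a : ℕ, a + d = n + 1 → 1 ≤ a →
      ∃ K : ℕ → ℕ → ℤ, ShiOn a n m K ∧ (∀ i j : ℕ, ¬(a ≤ i ∧ i ≤ j ∧ j ≤ n) → K i j = 0) ∧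
        ∀ i : ℕ, a ≤ i → i ≤ n → ∑ j ∈ Icc i n, K i j = lam i := by
  intro d
  induction d with
  | zero =>
    intro a hd ha
    refine ⟨fun _ _ => 0, ⟨?_, ?_⟩, fun _ _ _ => rfl, ?_⟩
    · intro i j h1 h2 h3; exact ⟨le_rfl, Int.natCast_nonneg m⟩
    · intro i l j h1 h2 h3 h4; exfalso; omega
    · intro i h1 h2; exfalso; omega
  | succ d IH =>
    intro a hd ha
    have han : a ≤ n := by omega
    obtain ⟨K', hK', hz', hs'⟩ := IH (a + 1) (by omega) (by omega)
    set K₀ : ℕ → ℕ → ℤ := fun i j => if i = a then (if a < j then K' (a+1) j else 0) else K' i j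
      with hK₀def
    have e0 : ∀ j, j ≤ a → K₀ a j = 0 := by
      intro j h; simp only [hK₀def]; simp [show ¬ a < j by omega]
    have e1 : ∀ j, a < j → K₀ a j = K' (a+1) j := by
      intro j h; simp only [hK₀def]; simp [h]
    have e2 : ∀ i j, i ≠ a → K₀ i j = K' i j := by
      intro i j h; simp only [hK₀def]; simp [h]
    have hb' := hK'.1
    have hK₀ : ShiOn a n m K₀ := by
      constructor
      · intro i j h1 h2 h3
        by_cases hia : i = a
        · subst hia
          rcases eq_or_lt_of_le h2 with heq | h2'
          · rw [← heq, e0 i le_rfl]; exact ⟨le_rfl, Int.natCast_nonneg m⟩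
          · rw [e1 j h2']; exact hb' (i+1) j le_rfl (by omega) h3
        · rw [e2 i j hia]; exact hb' i j (by omega) h2 h3
      · intro i l j h1 h2 h3 h4
        have hl1 : K₀ (l+1) j = K' (l+1) j := e2 _ _ (by omega)
        by_cases hia : i = a
        · subst hia
          have hj : K₀ i j = K' (i+1) j := e1 j (by omega)
          rcases eq_or_lt_of_le h2 with heq | h2'
          · rw [← heq] at hl1 ⊢
            rw [e0 i le_rfl, hl1, hj]
            constructor
            · intro h5; left; omega
            · intro h5
              have h6 := (hb' (i+1) j le_rfl (by omega) h4).2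
              omega
          · rw [e1 l h2', hl1, hj]
            exact hK'.2 (i+1) l j le_rfl h2' h3 h4
        · rw [e2 i j hia, e2 i l hia, hl1]
          exact hK'.2 i l j (by omega) h2 h3 h4
    have hz₀ : ∀ i j : ℕ, ¬(a ≤ i ∧ i ≤ j ∧ j ≤ n) → K₀ i j = 0 := by
      intro i j h
      by_cases hia : i = a
      · subst hia
        by_cases hja : i < j
        · rw [e1 j hja]; refine hz' _ _ ?_; rintro ⟨u1, u2, u3⟩; exact h ⟨le_rfl, by omega, u3⟩
        · exact e0 j (by omega)
      · rw [e2 i j hia]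
        refine hz' i j ?_; rintro ⟨u1, u2, u3⟩; exact h ⟨by omega, u2, u3⟩
    have hsum0 : ∑ j ∈ Icc a n, K₀ a j = ∑ j ∈ Icc (a+1) n, K' (a+1) j := by
      rw [sum_Icc_bot' (fun j => K₀ a j) a n han, e0 a le_rfl, zero_add]
      exact Finset.sum_congr rfl
        (fun j hj => e1 j (by rw [Finset.mem_Icc] at hj; omega))
    have hle : ∑ j ∈ Icc a n, K₀ a j ≤ lam a := by
      rw [hsum0]
      by_cases hcase : a + 1 ≤ n
      · rw [hs' (a+1) le_rfl hcase]; exact hmono a ha (by omega)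
      · rw [Finset.Icc_eq_empty (by omega), Finset.sum_empty]
        exact (hb a ha han).1
    have hub : lam a ≤ (m : ℤ) * ((n : ℤ) - a + 1) := (hb a ha han).2
    obtain ⟨K₂, f1, f2, f3, f4⟩ := shi_increment_many a n m ha han
      (lam a - ∑ j ∈ Icc a n, K₀ a j).toNat K₀ hK₀ hz₀
      (by rw [Int.toNat_of_nonneg (by omega)]; omega)
    refine ⟨K₂, f1, f2, ?_⟩
    intro i h1 h2
    by_cases hia : i = a
    · subst hia
      rw [f4, Int.toNat_of_nonneg (by omega)]
      omega
    · rw [Finset.sum_congr rfl (fun j _ => f3 i j hia),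
        Finset.sum_congr rfl (fun j (_ : j ∈ Icc i n) => e2 i j hia)]
      exact hs' i (by omega) h2

private lemma shi_bounds (n m : ℕ) (K : ℕ → ℕ → ℤ)
    (hK : (∀ i j : ℕ, 1 ≤ i → i ≤ j → j ≤ n → 0 ≤ K i j ∧ K i j ≤ (m : ℤ)) ∧
      ∀ i l j : ℕ, 1 ≤ i → i ≤ l → l < j → j ≤ n →
        (K i l + K (l + 1) j < (m : ℤ) →
          K i j - (K i l + K (l + 1) j) = 0 ∨ K i j - (K i l + K (l + 1) j) = 1) ∧
        ((m : ℤ) ≤ K i l + K (l + 1) j → K i j = (m : ℤ)))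
    (i j : ℕ) (hi : 1 ≤ i) (hij : i ≤ j) (hjn : j ≤ n) :
    ((j : ℤ) - i + 1) * (K i j - 1) < (∑ l ∈ Icc i j, K i l) + ∑ l ∈ Icc (i+1) j, K l j ∧
      (K i j < (m : ℤ) →
        (∑ l ∈ Icc i j, K i l) + ∑ l ∈ Icc (i+1) j, K l j ≤ ((j : ℤ) - i + 1) * K i j) := by
  rcases eq_or_lt_of_le hij with heq | hij'
  · subst heq
    rw [Finset.Icc_self, Finset.sum_singleton, Finset.Icc_eq_empty (by omega), Finset.sum_empty]
    constructor
    · have h : ((i : ℤ) - i + 1) * (K i i - 1) = K i i - 1 := by ring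
      rw [h]; omega
    · intro _
      have h : ((i : ℤ) - i + 1) * K i i = K i i := by ring
      rw [h]; omega
  · obtain ⟨j', rfl⟩ : ∃ j', j = j' + 1 := ⟨j - 1, by omega⟩
    have hij'' : i ≤ j' := by omega
    rw [Finset.sum_Icc_succ_top (by omega : i ≤ j' + 1) (fun l => K i l),
      sum_Icc_shift' (fun l => K l (j' + 1)) i j']
    have hlow : ∀ l ∈ Icc i j', K i (j'+1) - 1 ≤ K i l + K (l+1) (j'+1) := by
      intro l hl; rw [Finset.mem_Icc] at hl
      have t := hK.2 i l (j'+1) hi hl.1 (by omega) hjn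
      rcases lt_or_ge (K i l + K (l+1) (j'+1)) (m : ℤ) with hc | hc
      · rcases t.1 hc with h | h <;> omega
      · have h1 := (hK.1 i (j'+1) hi (by omega) hjn).2; omega
    have hE1 := Finset.card_nsmul_le_sum (Icc i j')
      (fun l => K i l + K (l+1) (j'+1)) (K i (j'+1) - 1) hlow
    have hE2 : K i (j'+1) < (m : ℤ) →
        ∑ l ∈ Icc i j', (K i l + K (l+1) (j'+1)) ≤ (Icc i j').card • K i (j'+1) := by
      intro hm'
      refine Finset.sum_le_card_nsmul _ _ _ ?_
      intro l hl; rw [Finset.mem_Icc] at hl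
      have t := hK.2 i l (j'+1) hi hl.1 (by omega) hjn
      rcases lt_or_ge (K i l + K (l+1) (j'+1)) (m : ℤ) with hc | hc
      · rcases t.1 hc with h | h <;> omega
      · exfalso; have := t.2 hc; omega
    rw [Nat.card_Icc, nsmul_eq_mul, Finset.sum_add_distrib] at hE1
    have hcast : ((j' + 1 - i : ℕ) : ℤ) = (j' : ℤ) + 1 - i := by omega
    rw [hcast] at hE1
    constructor
    · push_cast
      nlinarith [hE1]
    · intro hm'
      have hE2' := hE2 hm'
      rw [Nat.card_Icc, nsmul_eq_mul, Finset.sum_add_distrib, hcast] at hE2'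
      push_cast
      nlinarith [hE2']

private lemma shi_unique (n m : ℕ) (K K' : ℕ → ℕ → ℤ)
    (hK : IsShiTableau n m K) (hK' : IsShiTableau n m K')
    (hsum : ∀ i : ℕ, 1 ≤ i → i ≤ n →
      ∑ j ∈ Icc i n, K i j = ∑ j ∈ Icc i n, K' i j) :
    ∀ i j : ℕ, 1 ≤ i → i ≤ j → j ≤ n → K i j = K' i j := by
  suffices H : ∀ c : ℕ, ∀ i j : ℕ, 1 ≤ i → i ≤ j → j ≤ n → 2 * n = i + j + c →
      K i j = K' i j by
    intro i j h1 h2 h3; exact H (2 * n - i - j) i j h1 h2 h3 (by omega)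
  intro c
  induction c using Nat.strong_induction_on with
  | _ c IH =>
    intro i j h1 h2 h3 hc
    have hrow : ∑ l ∈ Icc (j+1) n, K i l = ∑ l ∈ Icc (j+1) n, K' i l :=
      Finset.sum_congr rfl (fun l hl => by
        rw [Finset.mem_Icc] at hl
        exact IH (2 * n - i - l) (by omega) i l h1 (by omega) hl.2 (by omega))
    have hcol : ∑ l ∈ Icc (i+1) j, K l j = ∑ l ∈ Icc (i+1) j, K' l j :=
      Finset.sum_congr rfl (fun l hl => by
        rw [Finset.mem_Icc] at hl
        exact IH (2 * n - l - j) (by omega) l j (by omega) hl.2 h3 (by omega))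
    have hN : (∑ l ∈ Icc i j, K i l) + ∑ l ∈ Icc (i+1) j, K l j
        = (∑ l ∈ Icc i j, K' i l) + ∑ l ∈ Icc (i+1) j, K' l j := by
      have e1 := sum_Icc_split' (K i) i j n (by omega) h3
      have e2 := sum_Icc_split' (K' i) i j n (by omega) h3
      have e3 := hsum i h1 (le_trans h2 h3)
      rw [e1, e2] at e3
      omega
    have b1 := shi_bounds n m K hK i j h1 h2 h3
    have b2 := shi_bounds n m K' hK' i j h1 h2 h3
    have hd : (0 : ℤ) < (j : ℤ) - i + 1 := by omega
    have hkm := (hK.1 i j h1 h2 h3).2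
    have hk'm := (hK'.1 i j h1 h2 h3).2
    rcases lt_or_eq_of_le hkm with hk | hk <;> rcases lt_or_eq_of_le hk'm with hk' | hk'
    · have u1 := b1.2 hk
      have u2 := b2.2 hk'
      have l1 := b1.1
      have l2 := b2.1
      rw [hN] at u1 l1
      have c1 : ((j : ℤ) - i + 1) * (K i j - 1) < ((j : ℤ) - i + 1) * K' i j :=
        lt_of_lt_of_le l1 u2
      have c2 : ((j : ℤ) - i + 1) * (K' i j - 1) < ((j : ℤ) - i + 1) * K i j :=
        lt_of_lt_of_le l2 u1
      have d1 := lt_of_mul_lt_mul_left c1 (le_of_lt hd)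
      have d2 := lt_of_mul_lt_mul_left c2 (le_of_lt hd)
      omega
    · exfalso
      have u1 := b1.2 hk
      have l2 := b2.1
      rw [← hN] at l2
      have c1 : ((j : ℤ) - i + 1) * (K' i j - 1) < ((j : ℤ) - i + 1) * K i j :=
        lt_of_lt_of_le l2 u1
      have d1 := lt_of_mul_lt_mul_left c1 (le_of_lt hd)
      omega
    · exfalso
      have u2 := b2.2 hk'
      have l1 := b1.1
      rw [hN] at l1
      have c1 : ((j : ℤ) - i + 1) * (K i j - 1) < ((j : ℤ) - i + 1) * K' i j :=
        lt_of_lt_of_le l1 u2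
      have d1 := lt_of_mul_lt_mul_left c1 (le_of_lt hd)
      omega
    · rw [hk, hk']

end ShiAux

/-- The row-sum map `φ_n`, sending a type-A Shi tableau `(k_{i,j})_{1 ≤ i ≤ j ≤ n}` of size
`(n,m)` to `(Σ_{j=i}^n k_{i,j})_{1 ≤ i ≤ n}`, is a bijection from the set of type-A Shi
tableaux of size `(n,m)` onto `P^m_n`. -/
theorem rowSum_bijection (n m : ℕ) (hn : 1 ≤ n) (hm : 1 ≤ m) :
    Set.BijOn (fun (K : ℕ → ℕ → ℤ) (i : ℕ) => ∑ j ∈ Finset.Icc i n, K i j)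
      (ShiSet n m) (PartSet n m) := by
  classical
  refine ⟨?_, ?_, ?_⟩
  · -- MapsTo
    rintro K ⟨hK, hz⟩
    refine ⟨⟨?_, ?_⟩, ?_⟩
    · intro i h1 h2
      constructor
      · exact Finset.sum_nonneg (fun j hj =>
          (hK.1 i j h1 (Finset.mem_Icc.1 hj).1 (Finset.mem_Icc.1 hj).2).1)
      · have hb := Finset.sum_le_card_nsmul (Finset.Icc i n) (fun j => K i j) ((m : ℤ))
          (fun j hj => (hK.1 i j h1 (Finset.mem_Icc.1 hj).1 (Finset.mem_Icc.1 hj).2).2)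
        rw [Nat.card_Icc, nsmul_eq_mul] at hb
        have hc : ((n + 1 - i : ℕ) : ℤ) = (n : ℤ) - i + 1 := by omega
        rw [hc] at hb
        calc (fun (K : ℕ → ℕ → ℤ) (i : ℕ) => ∑ j ∈ Finset.Icc i n, K i j) K i
            ≤ ((n : ℤ) - i + 1) * (m : ℤ) := hb
          _ = (m : ℤ) * ((n : ℤ) - (i : ℤ) + 1) := by ring
    · intro i h1 h2
      show ∑ j ∈ Finset.Icc (i+1) n, K (i+1) j ≤ ∑ j ∈ Finset.Icc i n, K i j
      have hpt : ∀ j ∈ Finset.Icc (i+1) n, K (i+1) j ≤ K i j := by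
        intro j hj; rw [Finset.mem_Icc] at hj
        have t := hK.2 i i j h1 le_rfl (by omega) hj.2
        have h0 := (hK.1 i i h1 le_rfl (by omega)).1
        have hb := (hK.1 (i+1) j (by omega) hj.1 hj.2).2
        rcases lt_or_ge (K i i + K (i+1) j) (m : ℤ) with hcnd | hcnd
        · rcases t.1 hcnd with h | h <;> omega
        · have := t.2 hcnd; omega
      calc ∑ j ∈ Finset.Icc (i+1) n, K (i+1) j
          ≤ ∑ j ∈ Finset.Icc (i+1) n, K i j := Finset.sum_le_sum hpt
        _ ≤ ∑ j ∈ Finset.Icc i n, K i j := by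
            rw [sum_Icc_bot' (K i) i n (by omega)]
            have h0 := (hK.1 i i h1 le_rfl (by omega)).1
            omega
    · intro i hi
      by_cases h1 : 1 ≤ i
      · show ∑ j ∈ Finset.Icc i n, K i j = 0
        rw [Finset.Icc_eq_empty (by omega), Finset.sum_empty]
      · exact Finset.sum_eq_zero (fun j _ => hz i j (by omega))
  · -- InjOn
    rintro K ⟨hK, hz⟩ K' ⟨hK', hz'⟩ heq
    funext i j
    by_cases h : 1 ≤ i ∧ i ≤ j ∧ j ≤ n
    · exact shi_unique n m K K' hK hK' (fun i _ _ => congrFun heq i) i j h.1 h.2.1 h.2.2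
    · rw [hz i j h, hz' i j h]
  · -- SurjOn
    rintro lam ⟨⟨hb, hmono⟩, hz⟩
    obtain ⟨K, hK, hKz, hKs⟩ := shi_exists n m lam hb hmono n 1 (by omega) le_rfl
    refine ⟨K, ⟨hK, hKz⟩, ?_⟩
    funext i
    show ∑ j ∈ Finset.Icc i n, K i j = lam i
    by_cases h1 : 1 ≤ i
    · by_cases h2 : i ≤ n
      · exact hKs i h1 h2
      · rw [Finset.Icc_eq_empty (by omega), Finset.sum_empty, hz i (by omega)]
    · rw [Finset.sum_eq_zero (fun j _ => hKz i j (by omega)), hz i (by omega)]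
end

section
/- Let D be a maximal m-dissection of the convex (m(n+1)+2)-gon whose vertices are labeled 0, 1, …, m(n+1)+1 in counterclockwise order, and let t_1 ≥ t_2 ≥ … ≥ t_n be the weakly decreasing rearrangement of the multiset of initial points of the n diagonals of D. Then t_i ≤ m(n−i+1) for all 1 ≤ i ≤ n; that is, (t_1, …, t_n) ∈ P^m_n. -/
/-- An `m`-diagonal of the convex `N`-gon with vertices labeled `0, 1, …, N−1`
counterclockwise, given as an ordered pair `(a, b)` with `a < b`:
`2 ≤ b − a ≤ N − 2` and `b − a ≡ 1 (mod m)`. -/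
def IsMDiagonal (N m : ℕ) (d : ℕ × ℕ) : Prop :=
  d.1 < d.2 ∧ d.2 ≤ N - 1 ∧ 2 ≤ d.2 - d.1 ∧ d.2 - d.1 ≤ N - 2 ∧
    (d.2 - d.1) % m = 1 % m

/-- Two diagonals `{a,b}` (`a < b`) and `{c,d}` (`c < d`) cross if
`a < c < b < d` or `c < a < d < b`. -/
def Crosses (d e : ℕ × ℕ) : Prop :=
  (d.1 < e.1 ∧ e.1 < d.2 ∧ d.2 < e.2) ∨ (e.1 < d.1 ∧ d.1 < e.2 ∧ e.2 < d.2)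

/-- The set of maximal `m`-dissections of the convex `(m(n+1)+2)`-gon with vertices
labeled `0, …, m(n+1)+1` counterclockwise: sets of `n` pairwise noncrossing
`m`-diagonals. -/
def DissSet (n m : ℕ) : Set (Finset (ℕ × ℕ)) :=
  {D | D.card = n ∧ (∀ d ∈ D, IsMDiagonal (m * (n + 1) + 2) m d) ∧
    ∀ d ∈ D, ∀ e ∈ D, d ≠ e → ¬ Crosses d e}

/-- A diagonal of length `≡ 1 (mod m)` and `≥ 2` has length `≥ m + 1`. -/
lemma diag_len_ge {m ℓ : ℕ} (hm : 1 ≤ m) (h2 : 2 ≤ ℓ) (hmod : ℓ % m = 1 % m) :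
    m + 1 ≤ ℓ := by
  by_contra h
  push_neg at h
  have hℓm : ℓ ≤ m := by omega
  rcases lt_or_eq_of_le hℓm with h' | rfl
  · rw [Nat.mod_eq_of_lt h'] at hmod
    have : 1 % m ≤ 1 := Nat.mod_le 1 m
    omega
  · rw [Nat.mod_self] at hmod
    have : ℓ ∣ 1 := Nat.dvd_of_mod_eq_zero hmod.symm
    have := Nat.le_of_dvd one_pos this
    omega

/-- Key lemma: a family of pairwise noncrossing "m-diagonals" whose endpoints all
lie in the window `[L, R]` has at most `(R - L - 1) / m` members. -/
lemma key_bound (m : ℕ) (hm : 1 ≤ m) :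
    ∀ k (F : Finset (ℕ × ℕ)) (L R : ℕ), F.card = k →
      (∀ d ∈ F, L ≤ d.1 ∧ d.1 < d.2 ∧ d.2 ≤ R ∧ 2 ≤ d.2 - d.1 ∧ (d.2 - d.1) % m = 1 % m) →
      (∀ d ∈ F, ∀ e ∈ F, d ≠ e → ¬ Crosses d e) →
      F.card ≤ (R - L - 1) / m := by
  intro k
  induction k using Nat.strong_induction_on with
  | _ k IH =>
    intro F L R hcard hmem hnc
    rcases Finset.eq_empty_or_nonempty F with rfl | hne
    · simp
    obtain ⟨d, hdF, hdmin⟩ := F.exists_min_image (fun e => e.2 - e.1) hne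
    obtain ⟨haL, hab, hbR, h2, hmod⟩ := hmem d hdF
    set a := d.1 with ha_def
    set b := d.2 with hb_def
    have hℓ : m + 1 ≤ b - a := diag_len_ge hm h2 hmod
    -- structural classification of the other diagonals
    have hstruct : ∀ e ∈ F.erase d,
        (e.2 ≤ a) ∨ (b ≤ e.1) ∨ (e.1 ≤ a ∧ b ≤ e.2 ∧ (b - a) + 1 ≤ e.2 - e.1) := by
      intro e he
      have heF := Finset.mem_of_mem_erase he
      have hed : e ≠ d := Finset.ne_of_mem_erase he
      obtain ⟨heL, hce, heR, he2, hemod⟩ := hmem e heF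
      have hmin := hdmin e heF
      have hnc1 := hnc d hdF e heF (fun h => hed h.symm)
      unfold Crosses at hnc1
      have hne' : e.1 ≠ a ∨ e.2 ≠ b := by
        by_contra h
        push_neg at h
        exact hed (Prod.ext h.1 h.2)
      omega
    classical
    set g : ℕ → ℕ := fun x => if x ≤ a then x else x - (b - a - 1) with hg_def
    have hgmono : ∀ x y, (x ≤ a ∨ b ≤ x) → (y ≤ a ∨ b ≤ y) → x < y → g x < g y := by
      intro x y hx hy hxy
      simp only [hg_def]
      split_ifs <;> omega
    have hginj : ∀ x y, (x ≤ a ∨ b ≤ x) → (y ≤ a ∨ b ≤ y) → g x = g y → x = y := by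
      intro x y hx hy hxy
      rcases lt_trichotomy x y with h | h | h
      · exact absurd hxy (Nat.ne_of_lt (hgmono x y hx hy h))
      · exact h
      · exact absurd hxy.symm (Nat.ne_of_lt (hgmono y x hy hx h))
    have hdom : ∀ e ∈ F.erase d, (e.1 ≤ a ∨ b ≤ e.1) ∧ (e.2 ≤ a ∨ b ≤ e.2) := by
      intro e he
      have heF := Finset.mem_of_mem_erase he
      obtain ⟨heL, hce, heR, he2, hemod⟩ := hmem e heF
      rcases hstruct e he with h | h | h <;> constructor <;> omega
    set G : ℕ × ℕ → ℕ × ℕ := fun e => (g e.1, g e.2) with hG_def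
    set F' := (F.erase d).image G with hF'_def
    have hinjG : Set.InjOn G (F.erase d) := by
      intro e he f hf hef
      have hde := hdom e (Finset.mem_coe.mp he)
      have hdf := hdom f (Finset.mem_coe.mp hf)
      have h1 : g e.1 = g f.1 := congrArg Prod.fst hef
      have h2' : g e.2 = g f.2 := congrArg Prod.snd hef
      exact Prod.ext (hginj _ _ hde.1 hdf.1 h1) (hginj _ _ hde.2 hdf.2 h2')
    have hcard' : F'.card = F.card - 1 := by
      rw [hF'_def, Finset.card_image_of_injOn hinjG, Finset.card_erase_of_mem hdF]
    have hdvdℓ : m ∣ (b - a) - 1 := (Nat.modEq_iff_dvd' (by omega)).mp hmod.symm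
    have hmem' : ∀ d' ∈ F', L ≤ d'.1 ∧ d'.1 < d'.2 ∧ d'.2 ≤ R - (b - a - 1) ∧
        2 ≤ d'.2 - d'.1 ∧ (d'.2 - d'.1) % m = 1 % m := by
      intro d' hd'
      obtain ⟨e, he, rfl⟩ := Finset.mem_image.mp hd'
      have heF := Finset.mem_of_mem_erase he
      obtain ⟨heL, hce, heR, he2, hemod⟩ := hmem e heF
      rcases hstruct e he with h | h | h
      · -- e.2 ≤ a : g is the identity on both endpoints
        have g1 : g e.1 = e.1 := by simp only [hg_def]; rw [if_pos (by omega)]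
        have g2 : g e.2 = e.2 := by simp only [hg_def]; rw [if_pos h]
        refine ⟨?_, ?_, ?_, ?_, ?_⟩ <;> simp only [hG_def, g1, g2]
        · exact heL
        · exact hce
        · omega
        · exact he2
        · exact hemod
      · -- b ≤ e.1 : both endpoints shifted down
        have g1 : g e.1 = e.1 - (b - a - 1) := by simp only [hg_def]; rw [if_neg (by omega)]
        have g2 : g e.2 = e.2 - (b - a - 1) := by simp only [hg_def]; rw [if_neg (by omega)]
        have hlen : e.2 - (b - a - 1) - (e.1 - (b - a - 1)) = e.2 - e.1 := by omega
        refine ⟨?_, ?_, ?_, ?_, ?_⟩ <;> simp only [hG_def, g1, g2]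
        · omega
        · omega
        · omega
        · omega
        · rw [hlen]; exact hemod
      · -- nested: e.1 ≤ a, b ≤ e.2
        obtain ⟨h1, h2'', h3⟩ := h
        have g1 : g e.1 = e.1 := by simp only [hg_def]; rw [if_pos h1]
        have g2 : g e.2 = e.2 - (b - a - 1) := by simp only [hg_def]; rw [if_neg (by omega)]
        have hlen : e.2 - (b - a - 1) - e.1 = (e.2 - e.1) - (b - a - 1) := by omega
        refine ⟨?_, ?_, ?_, ?_, ?_⟩ <;> simp only [hG_def, g1, g2]
        · exact heL
        · omega
        · omega
        · omega
        · rw [hlen]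
          have hd1 : m ∣ (e.2 - e.1) - 1 := (Nat.modEq_iff_dvd' (by omega)).mp hemod.symm
          have hd2 : m ∣ (e.2 - e.1) - (b - a - 1) - 1 := by
            have heq : (e.2 - e.1) - (b - a - 1) - 1 = ((e.2 - e.1) - 1) - ((b - a) - 1) := by
              omega
            rw [heq]
            exact Nat.dvd_sub hd1 hdvdℓ
          exact ((Nat.modEq_iff_dvd' (by omega)).mpr hd2).symm
    have hnc' : ∀ d' ∈ F', ∀ e' ∈ F', d' ≠ e' → ¬ Crosses d' e' := by
      intro d' hd' e' he' hne' hcr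
      obtain ⟨x, hx, rfl⟩ := Finset.mem_image.mp hd'
      obtain ⟨y, hy, rfl⟩ := Finset.mem_image.mp he'
      have hxy : x ≠ y := fun h => hne' (by rw [h])
      have hdx := hdom x hx
      have hdy := hdom y hy
      apply hnc x (Finset.mem_of_mem_erase hx) y (Finset.mem_of_mem_erase hy) hxy
      have hrefl : ∀ u v, (u ≤ a ∨ b ≤ u) → (v ≤ a ∨ b ≤ v) → g u < g v → u < v := by
        intro u v hu hv huv
        rcases lt_trichotomy u v with h | rfl | h
        · exact h
        · omega
        · exact absurd (hgmono v u hv hu h) (by omega)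
      rcases hcr with ⟨c1, c2, c3⟩ | ⟨c1, c2, c3⟩
      · exact Or.inl ⟨hrefl _ _ hdx.1 hdy.1 c1, hrefl _ _ hdy.1 hdx.2 c2,
          hrefl _ _ hdx.2 hdy.2 c3⟩
      · exact Or.inr ⟨hrefl _ _ hdy.1 hdx.1 c1, hrefl _ _ hdx.1 hdy.2 c2,
          hrefl _ _ hdy.2 hdx.2 c3⟩
    have hk : 1 ≤ k := by rw [← hcard]; exact Finset.card_pos.mpr hne
    have hF'k : F'.card = k - 1 := by rw [hcard', hcard]
    have hIH := IH (k - 1) (by omega) F' L (R - (b - a - 1)) hF'k hmem' hnc'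
    have hW : m ≤ R - L - 1 := by omega
    have hstep : (R - (b - a - 1) - L - 1) ≤ (R - L - 1) - m := by omega
    calc F.card = F'.card + 1 := by omega
      _ ≤ (R - (b - a - 1) - L - 1) / m + 1 := Nat.add_le_add_right hIH 1
      _ ≤ ((R - L - 1) - m) / m + 1 := Nat.add_le_add_right (Nat.div_le_div_right hstep) 1
      _ = (R - L - 1) / m := by
          rw [← Nat.add_div_right ((R - L - 1) - m) (by omega : 0 < m),
            Nat.sub_add_cancel hW]

/-- If `D` is a maximal `m`-dissection of the `(m(n+1)+2)`-gon and `t_1 ≥ … ≥ t_n` is the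
weakly decreasing rearrangement of the multiset of initial points of its diagonals, then
`t_i ≤ m (n − i + 1)` for all `1 ≤ i ≤ n`; that is, `(t_1, …, t_n) ∈ P^m_n`. -/
theorem initial_points_bounded (n m : ℕ) (hn : 1 ≤ n) (hm : 1 ≤ m)
    (D : Finset (ℕ × ℕ)) (hD : D ∈ DissSet n m)
    (t : ℕ → ℕ)
    (ht : (Finset.Icc 1 n).val.map t = D.val.map Prod.fst)
    (hdec : ∀ i j : ℕ, 1 ≤ i → i ≤ j → j ≤ n → t j ≤ t i) :
    ∀ i : ℕ, 1 ≤ i → i ≤ n → t i ≤ m * (n - i + 1) := by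
  obtain ⟨hcardD, hdiag, hnc⟩ := hD
  intro i hi1 hin
  by_contra hcon
  push_neg at hcon
  classical
  set s := t i with hs_def
  set F := D.filter (fun d => s ≤ d.1) with hF_def
  have hub : F.card ≤ (m * (n + 1) + 1 - s - 1) / m := by
    apply key_bound m hm F.card F s (m * (n + 1) + 1) rfl
    · intro d hd
      have hdD := Finset.mem_of_mem_filter d hd
      have hsd := (Finset.mem_filter.mp hd).2
      obtain ⟨h1, h2, h3, h4, h5⟩ := hdiag d hdD
      exact ⟨hsd, h1, by omega, h3, h5⟩
    · intro d hd e he hne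
      exact hnc d (Finset.mem_of_mem_filter d hd) e (Finset.mem_of_mem_filter e he) hne
  have hub2 : F.card < i := by
    have h1 : (m * (n + 1) + 1 - s - 1) ≤ m * i - 1 := by
      have hsum : m * (n - i + 1) + m * i = m * (n + 1) := by
        rw [← Nat.mul_add]
        congr 1
        omega
      omega
    have hmi : 0 < m * i := Nat.mul_pos (by omega) (by omega)
    have h2 : (m * i - 1) / m < i := by
      rw [Nat.div_lt_iff_lt_mul (by omega : 0 < m), Nat.mul_comm i m]
      omega
    calc F.card ≤ (m * (n + 1) + 1 - s - 1) / m := hub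
      _ ≤ (m * i - 1) / m := Nat.div_le_div_right h1
      _ < i := h2
  have hlow : i ≤ F.card := by
    have hcount : Multiset.countP (fun x => s ≤ x) ((Finset.Icc 1 n).val.map t)
        = Multiset.countP (fun x => s ≤ x) (D.val.map Prod.fst) := by rw [ht]
    rw [Multiset.countP_map, Multiset.countP_map] at hcount
    have hsub : Finset.Icc 1 i ⊆ (Finset.Icc 1 n).filter (fun j => s ≤ t j) := by
      intro j hj
      rw [Finset.mem_Icc] at hj
      rw [Finset.mem_filter, Finset.mem_Icc]
      exact ⟨⟨hj.1, by omega⟩, hdec j i hj.1 hj.2 hin⟩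
    have hcardIcc : (Finset.Icc 1 i).card = i := by
      rw [Nat.card_Icc]; omega
    calc i = (Finset.Icc 1 i).card := hcardIcc.symm
      _ ≤ ((Finset.Icc 1 n).filter (fun j => s ≤ t j)).card := Finset.card_le_card hsub
      _ = F.card := by
          rw [hF_def]
          simp only [Finset.card, Finset.filter_val]
          exact hcount
  omega
end

section
/- The number of type-A partitions λ = (λ_1, …, λ_n) of size (n,m) satisfying λ_i ≤ m(n−i+1) − 1 for all 1 ≤ i ≤ n equals (1/(n+1))·binom(m(n+1)+n−1, n); equivalently, (n+1) times this number equals the binomial coefficient binom(m(n+1)+n−1, n). (These partitions correspond under the bijections of the paper both to the bounded dominant regions of Cat^m(A_n) and to the facets of the positive cluster complex Δ^m_+(A_n).) -/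
/-- The set `P^m_n` of type-A partitions of size `(n,m)` (with natural-number parts),
normalized to vanish outside the index range `1 ≤ i ≤ n`. -/
def PartSetN (n m : ℕ) : Set (ℕ → ℕ) :=
  {lam | (∀ i : ℕ, 1 ≤ i → i ≤ n → lam i ≤ m * (n - i + 1)) ∧
    (∀ i : ℕ, 1 ≤ i → i < n → lam (i + 1) ≤ lam i) ∧
    (∀ i : ℕ, ¬(1 ≤ i ∧ i ≤ n) → lam i = 0)}


open Finset

namespace PosCat

/-- total length of the cyclic word -/
def M (n m : ℕ) : ℕ := m * (n + 1) + n

/-- number of `j < k` whose residue mod `M` lies in `S` -/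
def cnt (n m : ℕ) (S : Finset ℕ) (k : ℕ) : ℕ :=
  ((range k).filter (fun j => j % M n m ∈ S)).card

def g (n m : ℕ) (S : Finset ℕ) (k : ℕ) : ℤ :=
  (m + 1) * cnt n m S k - k

def GoodAt (n m : ℕ) (S : Finset ℕ) (t : ℕ) : Prop :=
  ∀ k, 1 ≤ k → k ≤ M n m → g n m S t < g n m S (t + k)

def Good (n m : ℕ) (S : Finset ℕ) : Prop := GoodAt n m S 0

theorem cnt_zero (S : Finset ℕ) : cnt n m S 0 = 0 := by simp [cnt]

theorem cnt_succ (n m : ℕ) (S : Finset ℕ) (k : ℕ) :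
    cnt n m S (k + 1) = cnt n m S k + if k % M n m ∈ S then 1 else 0 := by
  unfold cnt
  rw [range_add_one, filter_insert]
  split
  · rw [card_insert_of_notMem (by simp)]
  · simp

theorem cnt_M (n m : ℕ) (S : Finset ℕ) (hS : S ⊆ range (M n m)) :
    cnt n m S (M n m) = S.card := by
  unfold cnt
  congr 1
  ext j
  simp only [mem_filter, mem_range]
  constructor
  · rintro ⟨hj, hmem⟩
    rwa [Nat.mod_eq_of_lt hj] at hmem
  · intro hj
    have hlt := mem_range.mp (hS hj)
    exact ⟨hlt, by rwa [Nat.mod_eq_of_lt hlt]⟩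

theorem cnt_add_M (n m : ℕ) (S : Finset ℕ) (hS : S ⊆ range (M n m)) (k : ℕ) :
    cnt n m S (k + M n m) = cnt n m S k + S.card := by
  induction k with
  | zero => simp [cnt_zero, cnt_M n m S hS]
  | succ k ih =>
    have h1 : k + 1 + M n m = (k + M n m) + 1 := by omega
    rw [h1, cnt_succ, ih, Nat.add_mod_right, cnt_succ]
    omega

theorem g_zero (n m : ℕ) (S : Finset ℕ) : g n m S 0 = 0 := by simp [g, cnt]

theorem g_add_M (n m : ℕ) (S : Finset ℕ) (hS : S ⊆ range (M n m))
    (hcard : S.card = n + 1) (k : ℕ) :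
    g n m S (k + M n m) = g n m S k + 1 := by
  unfold g
  rw [cnt_add_M n m S hS, hcard]
  have : (M n m : ℤ) = m * (n + 1) + n := by unfold M; push_cast; ring
  push_cast
  rw [this]
  ring

theorem exists_unique_goodAt (n m : ℕ) (hn : 1 ≤ n) (S : Finset ℕ)
    (hS : S ⊆ range (M n m)) (hcard : S.card = n + 1) :
    ∃ t, t < M n m ∧ GoodAt n m S t ∧ ∀ t', t' < M n m → GoodAt n m S t' → t' = t := by
  have hM : 0 < M n m := by unfold M; omega
  obtain ⟨t0, ht0, hmin⟩ :=
    Finset.exists_min_image (range (M n m)) (g n m S) ⟨0, mem_range.mpr hM⟩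
  set A := (range (M n m)).filter (fun i => g n m S i = g n m S t0) with hA
  have hAne : A.Nonempty := ⟨t0, by simp [hA, ht0]⟩
  set t := A.max' hAne with htdef
  have htA : t ∈ A := A.max'_mem hAne
  have htlt : t < M n m := mem_range.mp (mem_filter.mp htA).1
  have htval : g n m S t = g n m S t0 := (mem_filter.mp htA).2
  have hminval : ∀ j, j < M n m → g n m S t ≤ g n m S j := fun j hj =>
    htval ▸ hmin j (mem_range.mpr hj)
  have hgood : GoodAt n m S t := by
    intro k hk1 hkM
    by_cases hc : t + k < M n m
    · rcases lt_or_eq_of_le (hminval (t + k) hc) with h | h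
      · exact h
      · exfalso
        have hmem : t + k ∈ A := mem_filter.mpr ⟨mem_range.mpr hc, by rw [← h, htval]⟩
        have := A.le_max' _ hmem
        omega
    · push_neg at hc
      have h1 : t + k = (t + k - M n m) + M n m := by omega
      have h2 : t + k - M n m < M n m := by omega
      have h3 := hminval _ h2
      have h4 : g n m S (t + k) = g n m S (t + k - M n m) + 1 := by
        conv_lhs => rw [h1]
        rw [g_add_M n m S hS hcard]
      omega
  have key : ∀ a b, a < b → b < M n m → GoodAt n m S a → GoodAt n m S b → False := by
    intro a b hab hb ga gb
    have h1 : g n m S a < g n m S b := by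
      have := ga (b - a) (by omega) (by omega)
      rwa [show a + (b - a) = b by omega] at this
    have h2 : g n m S b < g n m S a + 1 := by
      have := gb (a + M n m - b) (by omega) (by omega)
      rwa [show b + (a + M n m - b) = a + M n m by omega,
        g_add_M n m S hS hcard] at this
    omega
  refine ⟨t, htlt, hgood, ?_⟩
  intro t' ht' hgood'
  rcases Nat.lt_trichotomy t' t with h | h | h
  · exact absurd (key t' t h htlt hgood' hgood) not_false
  · exact h
  · exact absurd (key t t' h ht' hgood hgood') not_false

theorem goodAt_M_iff (n m : ℕ) (S : Finset ℕ) (hS : S ⊆ range (M n m))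
    (hcard : S.card = n + 1) :
    GoodAt n m S (M n m) ↔ GoodAt n m S 0 := by
  have e : ∀ j, g n m S (M n m + j) = g n m S j + 1 := fun j => by
    rw [Nat.add_comm]; exact g_add_M n m S hS hcard j
  have e3 : g n m S (M n m) = g n m S 0 + 1 := by simpa using e 0
  have e4 := g_zero n m S
  unfold GoodAt
  constructor <;> intro h k hk1 hkM <;> have H := h k hk1 hkM <;>
    have e2 : g n m S (M n m + k) = g n m S k + 1 := e k <;>
    simp only [Nat.zero_add] at H ⊢ <;> omega


def rot (n m r : ℕ) (S : Finset ℕ) : Finset ℕ := S.image (fun x => (x + r) % M n m)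

theorem rot_subset (n m : ℕ) (hM : 0 < M n m) (r : ℕ) (S : Finset ℕ) :
    rot n m r S ⊆ range (M n m) := by
  intro x hx
  simp only [rot, mem_image] at hx
  obtain ⟨y, _, rfl⟩ := hx
  exact mem_range.mpr (Nat.mod_lt _ hM)

theorem rot_card (n m : ℕ) (S : Finset ℕ) (hS : S ⊆ range (M n m)) (r : ℕ) :
    (rot n m r S).card = S.card := by
  apply card_image_of_injOn
  intro x hx y hy hxy
  have hx' := mem_range.mp (hS hx)
  have hy' := mem_range.mp (hS hy)
  have h2 : x ≡ y [MOD M n m] := Nat.ModEq.add_right_cancel' r hxy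
  rwa [Nat.ModEq, Nat.mod_eq_of_lt hx', Nat.mod_eq_of_lt hy'] at h2

theorem rot_zero (n m : ℕ) (S : Finset ℕ) (hS : S ⊆ range (M n m)) :
    rot n m 0 S = S := by
  unfold rot
  rw [show S.image (fun x => (x + 0) % M n m) = S.image id from
    image_congr (fun x hx => by
      simp [Nat.mod_eq_of_lt (mem_range.mp (hS hx))]), image_id]

theorem rot_rot (n m : ℕ) (S : Finset ℕ) (hS : S ⊆ range (M n m)) (r : ℕ)
    (hr : r ≤ M n m) : rot n m (M n m - r) (rot n m r S) = S := by
  unfold rot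
  rw [image_image]
  have key : ∀ x ∈ S, ((x + r) % M n m + (M n m - r)) % M n m = x := by
    intro x hx
    have hx' := mem_range.mp (hS hx)
    have h1 : (x + r) % M n m + (M n m - r) ≡ x + r + (M n m - r) [MOD M n m] :=
      (Nat.mod_modEq _ _).add_right _
    have h2 : ((x + r) % M n m + (M n m - r)) % M n m = (x + r + (M n m - r)) % M n m := h1
    rw [h2, show x + r + (M n m - r) = x + M n m by omega, Nat.add_mod_right,
      Nat.mod_eq_of_lt hx']
  calc S.image ((fun x => (x + (M n m - r)) % M n m) ∘ fun x => (x + r) % M n m)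
      = S.image id := image_congr (fun x hx => key x hx)
    _ = S := image_id

theorem mem_rot (n m : ℕ) (S : Finset ℕ) (hS : S ⊆ range (M n m)) (r t : ℕ)
    (hrt : r + t = M n m) (hM : 0 < M n m) (j : ℕ) :
    j % M n m ∈ rot n m r S ↔ (j + t) % M n m ∈ S := by
  constructor
  · intro hj
    simp only [rot, mem_image] at hj
    obtain ⟨x, hx, hxj⟩ := hj
    have hx' := mem_range.mp (hS hx)
    have h1 : x + r + t ≡ j + t [MOD M n m] := Nat.ModEq.add_right t hxj
    have h2 : (j + t) % M n m = x := by
      have h3 : (j + t) % M n m = (x + r + t) % M n m := h1.symm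
      rw [h3, show x + r + t = x + M n m by omega, Nat.add_mod_right, Nat.mod_eq_of_lt hx']
    rw [h2]; exact hx
  · intro hj
    refine mem_image.mpr ⟨(j + t) % M n m, hj, ?_⟩
    have h1 : (j + t) % M n m + r ≡ j + t + r [MOD M n m] := (Nat.mod_modEq _ _).add_right r
    have h2 : j + t + r ≡ j [MOD M n m] := by
      rw [show j + t + r = j + M n m by omega]
      exact (Nat.add_mod_right j (M n m) : _)
    exact h1.trans h2

theorem cnt_rot (n m : ℕ) (S : Finset ℕ) (hS : S ⊆ range (M n m)) (r t : ℕ)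
    (hrt : r + t = M n m) (hM : 0 < M n m) (k : ℕ) :
    (cnt n m (rot n m r S) k : ℤ) = cnt n m S (k + t) - cnt n m S t := by
  induction k with
  | zero => simp [cnt_zero]
  | succ k ih =>
    rw [cnt_succ, show k + 1 + t = (k + t) + 1 by omega, cnt_succ]
    have hmr := mem_rot n m S hS r t hrt hM k
    push_cast
    simp only [hmr]
    split_ifs with h1 <;> push_cast <;> omega

theorem g_rot (n m : ℕ) (S : Finset ℕ) (hS : S ⊆ range (M n m)) (r t : ℕ)
    (hrt : r + t = M n m) (hM : 0 < M n m) (k : ℕ) :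
    g n m (rot n m r S) k = g n m S (k + t) - g n m S t := by
  unfold g
  rw [cnt_rot n m S hS r t hrt hM k]
  push_cast
  ring

theorem good_rot_iff (n m : ℕ) (S : Finset ℕ) (hS : S ⊆ range (M n m)) (r t : ℕ)
    (hrt : r + t = M n m) (hM : 0 < M n m) :
    Good n m (rot n m r S) ↔ GoodAt n m S t := by
  unfold Good GoodAt
  constructor <;> intro h k hk1 hkM <;> have H := h k hk1 hkM <;>
    have e1 : g n m (rot n m r S) (0 + k) = g n m S ((0 + k) + t) - g n m S t :=
      g_rot n m S hS r t hrt hM (0 + k) <;>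
    have e0 : g n m (rot n m r S) 0 = g n m S (0 + t) - g n m S t :=
      g_rot n m S hS r t hrt hM 0 <;>
    simp only [Nat.zero_add] at e1 e0 H ⊢ <;>
    rw [show k + t = t + k from Nat.add_comm _ _] at * <;>
    omega


open scoped Classical in
noncomputable def Gf (n m : ℕ) : Finset (Finset ℕ) :=
  (powersetCard (n + 1) (range (M n m))).filter (fun T => Good n m T)

theorem gf_mem (n m : ℕ) {S : Finset ℕ} (hS : S ∈ Gf n m) :
    S ⊆ range (M n m) ∧ S.card = n + 1 ∧ Good n m S := by
  classical
  simp only [Gf, mem_filter, mem_powersetCard] at hS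
  exact ⟨hS.1.1, hS.1.2, hS.2⟩

theorem card_gf_mul (n m : ℕ) (hn : 1 ≤ n) :
    (Gf n m).card * M n m = (M n m).choose (n + 1) := by
  classical
  have hM : 0 < M n m := by unfold M; omega
  have hbij : ((Gf n m) ×ˢ range (M n m)).card
      = (powersetCard (n + 1) (range (M n m))).card := by
    apply card_bij (fun p _ => rot n m p.2 p.1)
    · rintro ⟨S, r⟩ hp
      simp only [mem_product] at hp
      obtain ⟨hSsub, hScard, _⟩ := gf_mem n m hp.1
      exact mem_powersetCard.mpr ⟨rot_subset n m hM r S,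
        by rw [rot_card n m S hSsub r, hScard]⟩
    · rintro ⟨S1, r1⟩ hp1 ⟨S2, r2⟩ hp2 heq
      simp only [mem_product, mem_range] at hp1 hp2
      obtain ⟨hS1sub, hS1card, hS1good⟩ := gf_mem n m hp1.1
      obtain ⟨hS2sub, hS2card, hS2good⟩ := gf_mem n m hp2.1
      have hr1 := hp1.2
      have hr2 := hp2.2
      set T := rot n m r1 S1 with hT
      have hT2 : T = rot n m r2 S2 := heq
      have hTsub : T ⊆ range (M n m) := rot_subset n m hM r1 S1
      have hTcard : T.card = n + 1 := by rw [hT, rot_card n m S1 hS1sub, hS1card]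
      have hback1 : rot n m (M n m - r1) T = S1 := rot_rot n m S1 hS1sub r1 (by omega)
      have hback2 : rot n m (M n m - r2) T = S2 := by
        rw [hT2]; exact rot_rot n m S2 hS2sub r2 (by omega)
      have hg1 : GoodAt n m T r1 := by
        rw [← good_rot_iff n m T hTsub (M n m - r1) r1 (by omega) hM, hback1]
        exact hS1good
      have hg2 : GoodAt n m T r2 := by
        rw [← good_rot_iff n m T hTsub (M n m - r2) r2 (by omega) hM, hback2]
        exact hS2good
      obtain ⟨t, htlt, htgood, htuniq⟩ := exists_unique_goodAt n m hn T hTsub hTcard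
      have e1 : r1 = t := htuniq r1 hr1 hg1
      have e2 : r2 = t := htuniq r2 hr2 hg2
      have : r1 = r2 := by omega
      subst this
      have : S1 = S2 := by rw [← hback1, ← hback2]
      simp [this]
    · intro T hT
      rw [mem_powersetCard] at hT
      obtain ⟨hTsub, hTcard⟩ := hT
      obtain ⟨t, htlt, htgood, _⟩ := exists_unique_goodAt n m hn T hTsub hTcard
      by_cases ht0 : t = 0
      · refine ⟨⟨T, 0⟩, ?_, ?_⟩
        · refine mem_product.mpr ⟨?_, mem_range.mpr hM⟩
          simp only [Gf, mem_filter, mem_powersetCard]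
          exact ⟨⟨hTsub, hTcard⟩, by unfold Good; rw [← ht0]; exact htgood⟩
        · exact rot_zero n m T hTsub
      · refine ⟨⟨rot n m (M n m - t) T, t⟩, ?_, ?_⟩
        · refine mem_product.mpr ⟨?_, mem_range.mpr htlt⟩
          simp only [Gf, mem_filter, mem_powersetCard]
          refine ⟨⟨rot_subset n m hM _ T, by rw [rot_card n m T hTsub, hTcard]⟩, ?_⟩
          rw [good_rot_iff n m T hTsub (M n m - t) t (by omega) hM]
          exact htgood
        · have : M n m - (M n m - t) = t := by omega
          calc rot n m t (rot n m (M n m - t) T)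
              = rot n m (M n m - (M n m - t)) (rot n m (M n m - t) T) := by rw [this]
            _ = T := rot_rot n m T hTsub (M n m - t) (by omega)
  rw [card_product, card_range] at hbij
  rw [hbij, card_powersetCard, card_range]


def toF (n : ℕ) (lam : ℕ → ℕ) : Finset ℕ :=
  insert 0 ((Icc 1 n).image (fun i => lam (n + 1 - i) + i))

theorem lam_anti (n : ℕ) (lam : ℕ → ℕ)
    (h2 : ∀ i, 1 ≤ i → i < n → lam (i + 1) ≤ lam i) :
    ∀ a b, 1 ≤ a → a ≤ b → b ≤ n → lam b ≤ lam a := by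
  intro a b ha hab hbn
  induction b with
  | zero => omega
  | succ b ih =>
    rcases Nat.eq_or_lt_of_le hab with h | h
    · exact h ▸ le_rfl
    · have hb1 : lam (b + 1) ≤ lam b := h2 b (by omega) (by omega)
      have hb2 := ih (by omega) (by omega)
      omega

theorem f_strict (n : ℕ) (lam : ℕ → ℕ)
    (h2 : ∀ i, 1 ≤ i → i < n → lam (i + 1) ≤ lam i) :
    ∀ i i', 1 ≤ i → i < i' → i' ≤ n →
      lam (n + 1 - i) + i < lam (n + 1 - i') + i' := by
  intro i i' hi hii hi'
  have := lam_anti n lam h2 (n + 1 - i') (n + 1 - i) (by omega) (by omega) (by omega)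
  omega

theorem f_bound (n m : ℕ) (lam : ℕ → ℕ)
    (hstrict : ∀ i, 1 ≤ i → i ≤ n → lam i + 1 ≤ m * (n - i + 1)) :
    ∀ i, 1 ≤ i → i ≤ n → lam (n + 1 - i) + i + 1 ≤ (m + 1) * i := by
  intro i hi hin
  have h1 := hstrict (n + 1 - i) (by omega) (by omega)
  have h2 : n - (n + 1 - i) + 1 = i := by omega
  rw [h2] at h1
  have h3 : (m + 1) * i = m * i + i := by ring
  omega

theorem cnt_eq (n m : ℕ) (S : Finset ℕ) (k : ℕ) (hk : k ≤ M n m) :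
    cnt n m S k = ((range k).filter (fun j => j ∈ S)).card := by
  unfold cnt
  congr 1
  apply filter_congr
  intro j hj
  simp [Nat.mod_eq_of_lt (lt_of_lt_of_le (mem_range.mp hj) hk)]

theorem toF_mem_Gf (n m : ℕ) (hn : 1 ≤ n) (hm : 1 ≤ m) (lam : ℕ → ℕ)
    (hb : ∀ i, 1 ≤ i → i ≤ n → lam i ≤ m * (n - i + 1))
    (hdec : ∀ i, 1 ≤ i → i < n → lam (i + 1) ≤ lam i)
    (hz : ∀ i, ¬(1 ≤ i ∧ i ≤ n) → lam i = 0)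
    (hstrict : ∀ i, 1 ≤ i → i ≤ n → lam i + 1 ≤ m * (n - i + 1)) :
    toF n lam ∈ Gf n m := by
  classical
  have hM : 0 < M n m := by unfold M; omega
  set f : ℕ → ℕ := fun i => lam (n + 1 - i) + i with hf
  have htoF : toF n lam = insert 0 ((Icc 1 n).image f) := rfl
  have hmono := f_strict n lam hdec
  have hInj : Set.InjOn f ↑(Icc 1 n) := by
    intro a ha b hb' heq
    simp only [coe_Icc, Set.mem_Icc] at ha hb'
    rcases Nat.lt_trichotomy a b with h | h | h
    · exact absurd heq (Nat.ne_of_lt (hmono a b ha.1 h hb'.2))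
    · exact h
    · exact absurd heq.symm (Nat.ne_of_lt (hmono b a hb'.1 h ha.2))
  have hfg1 : ∀ i, 1 ≤ i → 1 ≤ f i := by intro i hi; simp only [hf]; omega
  have h0img : (0 : ℕ) ∉ (Icc 1 n).image f := by
    simp only [mem_image, mem_Icc]
    rintro ⟨i, ⟨hi1, _⟩, hfi⟩
    have := hfg1 i hi1
    omega
  have hsub : toF n lam ⊆ range (M n m) := by
    rw [htoF]
    intro x hx
    rcases mem_insert.mp hx with rfl | hx
    · exact mem_range.mpr hM
    · obtain ⟨i, hi, rfl⟩ := mem_image.mp hx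
      rw [mem_Icc] at hi
      have h1 := f_bound n m lam hstrict i hi.1 hi.2
      have h2 : (m + 1) * i ≤ (m + 1) * n := Nat.mul_le_mul_left _ hi.2
      have h3 : (m + 1) * n = m * n + n := by ring
      have h4 : m * (n + 1) = m * n + m := by ring
      have h5 : M n m = m * (n + 1) + n := rfl
      refine mem_range.mpr ?_
      simp only [hf] at h1 ⊢
      omega
  have hcard : (toF n lam).card = n + 1 := by
    rw [htoF, card_insert_of_notMem h0img, card_image_of_injOn hInj, Nat.card_Icc]
    omega
  have hGood : Good n m (toF n lam) := by
    intro k hk1 hkM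
    rw [Nat.zero_add, g_zero]
    unfold g
    rw [cnt_eq n m _ k hkM]
    set J := (Icc 1 n).filter (fun i => f i < k) with hJ
    have hset : (range k).filter (fun x => x ∈ toF n lam) = insert 0 (J.image f) := by
      ext x
      simp only [mem_filter, mem_range, htoF, mem_insert, mem_image, hJ, mem_filter, mem_Icc]
      constructor
      · rintro ⟨hxk, hx0 | ⟨i, hi, rfl⟩⟩
        · exact Or.inl hx0
        · exact Or.inr ⟨i, ⟨hi, hxk⟩, rfl⟩
      · rintro (rfl | ⟨i, ⟨hi, hfi⟩, rfl⟩)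
        · exact ⟨by omega, Or.inl rfl⟩
        · exact ⟨hfi, Or.inr ⟨i, hi, rfl⟩⟩
    have h0J : (0 : ℕ) ∉ J.image f := by
      intro hx
      exact h0img (image_subset_image (filter_subset _ _) hx)
    have hcard2 : ((range k).filter (fun x => x ∈ toF n lam)).card = 1 + J.card := by
      rw [hset, card_insert_of_notMem h0J,
        card_image_of_injOn (hInj.mono (by exact_mod_cast filter_subset _ _))]
      omega
    have hJle : J.card ≤ n := by
      have := card_filter_le (Icc 1 n) (fun i => f i < k)
      rwa [Nat.card_Icc, Nat.add_sub_cancel] at this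
    have hN : k < (m + 1) * (1 + J.card) := by
      rcases Nat.eq_or_lt_of_le hJle with hj | hj
      · have h6 : (m + 1) * (1 + n) = m * (n + 1) + (1 + n) := by ring
        have h5 : M n m = m * (n + 1) + n := rfl
        rw [hj]
        omega
      · have hfk : k ≤ f (J.card + 1) := by
          by_contra hcon
          push_neg at hcon
          have hsubJ : Icc 1 (J.card + 1) ⊆ J := by
            intro i hi
            rw [mem_Icc] at hi
            rw [hJ, mem_filter, mem_Icc]
            refine ⟨⟨hi.1, by omega⟩, ?_⟩
            rcases Nat.eq_or_lt_of_le hi.2 with h | h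
            · rwa [h]
            · exact lt_trans (hmono i (J.card + 1) hi.1 (by omega) (by omega)) hcon
          have := card_le_card hsubJ
          rw [Nat.card_Icc, Nat.add_sub_cancel] at this
          omega
        have h7 := f_bound n m lam hstrict (J.card + 1) (by omega) (by omega)
        have h8 : (m + 1) * (J.card + 1) = (m + 1) * (1 + J.card) := by ring
        have h9 : f (J.card + 1) = lam (n + 1 - (J.card + 1)) + (J.card + 1) := rfl
        omega
    rw [hcard2]
    have hZ : (k : ℤ) < ((m : ℤ) + 1) * ((1 + J.card : ℕ) : ℤ) := by exact_mod_cast hN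
    push_cast at hZ ⊢
    linarith
  simp only [Gf, mem_filter, mem_powersetCard]
  exact ⟨⟨hsub, hcard⟩, hGood⟩


theorem exists_lam_of_Gf (n m : ℕ) (hn : 1 ≤ n) (hm : 1 ≤ m) (T : Finset ℕ)
    (hT : T ∈ Gf n m) :
    ∃ lam : ℕ → ℕ,
      ((∀ i, 1 ≤ i → i ≤ n → lam i ≤ m * (n - i + 1)) ∧
       (∀ i, 1 ≤ i → i < n → lam (i + 1) ≤ lam i) ∧
       (∀ i, ¬(1 ≤ i ∧ i ≤ n) → lam i = 0) ∧
       (∀ i, 1 ≤ i → i ≤ n → lam i + 1 ≤ m * (n - i + 1))) ∧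
      toF n lam = T := by
  classical
  obtain ⟨hTsub, hTcard, hTgood⟩ := gf_mem n m hT
  have hM : 0 < M n m := by unfold M; omega
  set e : Fin (n + 1) ↪o ℕ := T.orderEmbOfFin hTcard with he
  have hemem : ∀ i, e i ∈ T := fun i => orderEmbOfFin_mem T hTcard i
  have heltM : ∀ i, e i < M n m := fun i => mem_range.mp (hTsub (hemem i))
  have hstrict : StrictMono e := (T.orderEmbOfFin hTcard).strictMono
  have h0T : (0 : ℕ) ∈ T := by
    by_contra h0
    have h1 := hTgood 1 le_rfl (by omega)
    rw [Nat.zero_add, g_zero] at h1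
    have h3 := cnt_succ n m T 0
    rw [cnt_zero, Nat.zero_mod, if_neg h0] at h3
    unfold g at h1
    rw [h3] at h1
    simp at h1
  have he0 : e ⟨0, Nat.succ_pos n⟩ = 0 := by
    rw [he, orderEmbOfFin_zero hTcard (Nat.succ_pos n)]
    exact le_antisymm (min'_le T 0 h0T) (Nat.zero_le _)
  have hge : ∀ i : Fin (n + 1), (i : ℕ) ≤ e i := by
    intro i
    induction i using Fin.induction with
    | zero =>
      have : e 0 = 0 := he0
      simp [this]
    | succ j ih =>
      have hlt : e j.castSucc < e j.succ := hstrict (Fin.castSucc_lt_succ (i := j))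
      simp only [Fin.coe_castSucc] at ih
      simp only [Fin.val_succ]
      omega
  have rank : ∀ i : Fin (n + 1), cnt n m T (e i) = (i : ℕ) := by
    intro i
    rw [cnt_eq n m T _ (le_of_lt (heltM i))]
    have hset : (range (e i)).filter (fun x => x ∈ T)
        = (Finset.Iio i).image (fun j => e j) := by
      ext x
      simp only [mem_filter, mem_range, mem_image, mem_Iio]
      constructor
      · rintro ⟨hxk, hxT⟩
        have hx : x ∈ Set.range e := by
          rw [he, range_orderEmbOfFin]
          exact hxT
        obtain ⟨j, rfl⟩ := hx
        exact ⟨j, hstrict.lt_iff_lt.mp hxk, rfl⟩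
      · rintro ⟨j, hj, rfl⟩
        exact ⟨hstrict hj, hemem j⟩
    rw [hset, card_image_of_injective _ hstrict.injective, Fin.card_Iio]
  have hbound : ∀ i : Fin (n + 1), 1 ≤ (i : ℕ) → e i + 1 ≤ (m + 1) * (i : ℕ) := by
    intro i hi
    have hei1 : 1 ≤ e i := le_trans hi (hge i)
    have hgd := hTgood (e i) hei1 (le_of_lt (heltM i))
    rw [Nat.zero_add, g_zero] at hgd
    unfold g at hgd
    rw [rank i] at hgd
    have hZ : ((e i : ℕ) : ℤ) < ((m : ℤ) + 1) * ((i : ℕ) : ℤ) := by push_cast at hgd ⊢; linarith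
    have hN : e i < (m + 1) * (i : ℕ) := by exact_mod_cast hZ
    exact hN
  set lam : ℕ → ℕ := fun j =>
    if h : 1 ≤ j ∧ j ≤ n then e ⟨n + 1 - j, by omega⟩ - (n + 1 - j) else 0 with hlamdef
  have hlamval : ∀ j (h1 : 1 ≤ j) (h2 : j ≤ n),
      lam j = e ⟨n + 1 - j, by omega⟩ - (n + 1 - j) := by
    intro j h1 h2
    rw [hlamdef]
    simp only []
    rw [dif_pos ⟨h1, h2⟩]
  have hlamval2 : ∀ i (h1 : 1 ≤ i) (h2 : i ≤ n),
      lam (n + 1 - i) + i = (e ⟨i, by omega⟩ : ℕ) := by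
    intro i hi1 hin
    rw [hlamval (n + 1 - i) (by omega) (by omega)]
    have hfin : (⟨n + 1 - (n + 1 - i), by omega⟩ : Fin (n + 1)) = ⟨i, by omega⟩ := by
      apply Fin.ext
      simp only []
      omega
    rw [hfin]
    have hgei : i ≤ (e ⟨i, by omega⟩ : ℕ) := hge ⟨i, by omega⟩
    have hidx : n + 1 - (n + 1 - i) = i := by omega
    rw [hidx]
    omega
  have hkey : ∀ j (h1 : 1 ≤ j) (h2 : j ≤ n),
      lam j + (n + 1 - j) = (e ⟨n + 1 - j, by omega⟩ : ℕ) ∧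
      n + 1 - j ≤ (e ⟨n + 1 - j, by omega⟩ : ℕ) ∧
      (e ⟨n + 1 - j, by omega⟩ : ℕ) + 1 ≤ (m + 1) * (n + 1 - j) := by
    intro j h1 h2
    have hgei : n + 1 - j ≤ (e ⟨n + 1 - j, by omega⟩ : ℕ) := hge ⟨n + 1 - j, by omega⟩
    have hbd := hbound ⟨n + 1 - j, by omega⟩ (by simp only []; omega)
    refine ⟨?_, hgei, hbd⟩
    rw [hlamval j h1 h2]
    omega
  have hstrictlam : ∀ i, 1 ≤ i → i ≤ n → lam i + 1 ≤ m * (n - i + 1) := by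
    intro i hi1 hin
    obtain ⟨hv, hg, hb⟩ := hkey i hi1 hin
    have h3 : (m + 1) * (n + 1 - i) = m * (n + 1 - i) + (n + 1 - i) := by ring
    have h4 : n - i + 1 = n + 1 - i := by omega
    rw [h4]
    omega
  have hdec : ∀ i, 1 ≤ i → i < n → lam (i + 1) ≤ lam i := by
    intro i hi1 hin
    obtain ⟨hv1, hg1, _⟩ := hkey i hi1 (by omega)
    obtain ⟨hv2, hg2, _⟩ := hkey (i + 1) (by omega) (by omega)
    have hmlt : (e ⟨n + 1 - (i + 1), by omega⟩ : ℕ) < (e ⟨n + 1 - i, by omega⟩ : ℕ) := by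
      apply hstrict
      simp only [Fin.mk_lt_mk]
      omega
    omega
  have hz : ∀ i, ¬(1 ≤ i ∧ i ≤ n) → lam i = 0 := by
    intro i hi
    rw [hlamdef]
    simp only []
    rw [dif_neg hi]
  refine ⟨lam, ⟨fun i h1 h2 => by have := hstrictlam i h1 h2; omega, hdec, hz, hstrictlam⟩, ?_⟩
  ext x
  simp only [toF, mem_insert, mem_image, mem_Icc]
  constructor
  · rintro (rfl | ⟨i, ⟨hi1, hin⟩, rfl⟩)
    · exact h0T
    · rw [hlamval2 i hi1 hin]
      exact hemem _
  · intro hxT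
    have hx : x ∈ Set.range e := by
      rw [he, range_orderEmbOfFin]
      exact hxT
    obtain ⟨j, rfl⟩ := hx
    rcases Nat.eq_zero_or_pos (j : ℕ) with hj0 | hjpos
    · left
      have : j = ⟨0, Nat.succ_pos n⟩ := Fin.ext hj0
      rw [this, he0]
    · right
      refine ⟨(j : ℕ), ⟨hjpos, by omega⟩, ?_⟩
      rw [hlamval2 (j : ℕ) hjpos (by omega)]


theorem toF_injOn (n : ℕ) (hn : 1 ≤ n) (lam lam' : ℕ → ℕ)
    (hdec : ∀ i, 1 ≤ i → i < n → lam (i + 1) ≤ lam i)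
    (hz : ∀ i, ¬(1 ≤ i ∧ i ≤ n) → lam i = 0)
    (hdec' : ∀ i, 1 ≤ i → i < n → lam' (i + 1) ≤ lam' i)
    (hz' : ∀ i, ¬(1 ≤ i ∧ i ≤ n) → lam' i = 0)
    (heq : toF n lam = toF n lam') : lam = lam' := by
  classical
  set f : ℕ → ℕ := fun i => lam (n + 1 - i) + i with hf
  set f' : ℕ → ℕ := fun i => lam' (n + 1 - i) + i with hf'
  set X := (Icc 1 n).image f with hX
  set X' := (Icc 1 n).image f' with hX'
  have h0X : (0 : ℕ) ∉ X := by
    simp only [hX, mem_image, mem_Icc, hf]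
    rintro ⟨i, ⟨hi1, _⟩, hfi⟩
    omega
  have h0X' : (0 : ℕ) ∉ X' := by
    simp only [hX', mem_image, mem_Icc, hf']
    rintro ⟨i, ⟨hi1, _⟩, hfi⟩
    omega
  have hXX : X = X' := by
    have hins : insert 0 X = insert 0 X' := heq
    rw [← erase_insert h0X, ← erase_insert h0X', hins]
  have hmono := f_strict n lam hdec
  have hmono' := f_strict n lam' hdec'
  have hInj : Set.InjOn f ↑(Icc 1 n) := by
    intro a ha b hb' heq2
    simp only [coe_Icc, Set.mem_Icc] at ha hb'
    rcases Nat.lt_trichotomy a b with h | h | h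
    · exact absurd heq2 (Nat.ne_of_lt (hmono a b ha.1 h hb'.2))
    · exact h
    · exact absurd heq2.symm (Nat.ne_of_lt (hmono b a hb'.1 h ha.2))
  have hcardX : X.card = n := by
    rw [hX, card_image_of_injOn hInj, Nat.card_Icc]
    omega
  set F : Fin n → ℕ := fun j => f ((j : ℕ) + 1) with hF
  set F' : Fin n → ℕ := fun j => f' ((j : ℕ) + 1) with hF'
  have hFmem : ∀ j, F j ∈ X := by
    intro j
    rw [hX]
    exact mem_image.mpr ⟨(j : ℕ) + 1, mem_Icc.mpr ⟨by omega, by omega⟩, rfl⟩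
  have hF'mem : ∀ j, F' j ∈ X := by
    intro j
    rw [hXX, hX']
    exact mem_image.mpr ⟨(j : ℕ) + 1, mem_Icc.mpr ⟨by omega, by omega⟩, rfl⟩
  have hFmono : StrictMono F := by
    intro a b hab
    exact hmono ((a : ℕ) + 1) ((b : ℕ) + 1) (by omega) (by exact_mod_cast Nat.add_lt_add_right hab 1) (by omega)
  have hF'mono : StrictMono F' := by
    intro a b hab
    exact hmono' ((a : ℕ) + 1) ((b : ℕ) + 1) (by omega) (by exact_mod_cast Nat.add_lt_add_right hab 1) (by omega)
  have hFeq : F = fun j => X.orderEmbOfFin hcardX j := orderEmbOfFin_unique hcardX hFmem hFmono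
  have hF'eq : F' = fun j => X.orderEmbOfFin hcardX j := orderEmbOfFin_unique hcardX hF'mem hF'mono
  have hFF' : ∀ j : Fin n, F j = F' j := by
    intro j
    rw [hFeq, hF'eq]
  funext i
  by_cases hi : 1 ≤ i ∧ i ≤ n
  · have hjlt : n - i < n := by omega
    have := hFF' ⟨n - i, hjlt⟩
    simp only [hF, hF', hf, hf'] at this
    have hidx : n + 1 - ((⟨n - i, hjlt⟩ : Fin n) + 1) = i := by
      simp only []
      omega
    rw [hidx] at this
    omega
  · rw [hz i hi, hz' i hi]

theorem ncard_eq_gf (n m : ℕ) (hn : 1 ≤ n) (hm : 1 ≤ m) :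
    {lam ∈ PartSetN n m | ∀ i : ℕ, 1 ≤ i → i ≤ n → lam i + 1 ≤ m * (n - i + 1)}.ncard
      = (Gf n m).card := by
  classical
  set A := {lam ∈ PartSetN n m | ∀ i : ℕ, 1 ≤ i → i ≤ n → lam i + 1 ≤ m * (n - i + 1)}
    with hA
  have himg : toF n '' A = ↑(Gf n m) := by
    apply Set.Subset.antisymm
    · rintro x ⟨lam, hlam, rfl⟩
      have h1 : lam ∈ PartSetN n m := hlam.1
      obtain ⟨hb, hdec, hz⟩ := h1
      exact toF_mem_Gf n m hn hm lam hb hdec hz hlam.2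
    · intro T hT
      obtain ⟨lam, ⟨hb, hdec, hz, hstrict⟩, hTeq⟩ :=
        exists_lam_of_Gf n m hn hm T (by exact_mod_cast hT)
      exact ⟨lam, ⟨⟨hb, hdec, hz⟩, hstrict⟩, hTeq⟩
  have hinj : Set.InjOn (toF n) A := by
    intro a ha b hb h
    exact toF_injOn n hn a b ha.1.2.1 ha.1.2.2 hb.1.2.1 hb.1.2.2 h
  rw [← Set.ncard_coe_finset, ← himg, Set.ncard_image_of_injOn hinj]

theorem choose_aux (n K : ℕ) (hK : 1 ≤ K) :
    K * (K - 1).choose n = K.choose (n + 1) * (n + 1) := by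
  have h4 := Nat.add_one_mul_choose_eq (K - 1) n
  have h5 : K - 1 + 1 = K := by omega
  rwa [h5] at h4

end PosCat


/-- The number of type-A partitions `(lam_1, …, lam_n)` of size `(n,m)` with
`lam_i ≤ m(n−i+1) − 1` for all `1 ≤ i ≤ n` equals
`(1/(n+1)) · C(m(n+1)+n−1, n)`:  `(n+1)` times this number is `C(m(n+1)+n−1, n)`. -/
theorem positive_catalan_count (n m : ℕ) (hn : 1 ≤ n) (hm : 1 ≤ m) :
    (n + 1) *
      {lam ∈ PartSetN n m | ∀ i : ℕ, 1 ≤ i → i ≤ n → lam i + 1 ≤ m * (n - i + 1)}.ncard =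
    Nat.choose (m * (n + 1) + n - 1) n := by

  have hM : 0 < PosCat.M n m := by unfold PosCat.M; omega
  have h1 := PosCat.card_gf_mul n m hn
  have h2 := PosCat.ncard_eq_gf n m hn hm
  rw [h2]
  have hM1 : m * (n + 1) + n - 1 = PosCat.M n m - 1 := rfl
  rw [hM1]
  have h3 := PosCat.choose_aux n (PosCat.M n m) hM
  apply Nat.eq_of_mul_eq_mul_left hM
  calc PosCat.M n m * ((n + 1) * (PosCat.Gf n m).card)
      = (PosCat.Gf n m).card * PosCat.M n m * (n + 1) := by ring
    _ = (PosCat.M n m).choose (n + 1) * (n + 1) := by rw [h1]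
    _ = PosCat.M n m * (PosCat.M n m - 1).choose n := h3.symm
end

section
/- The number of type-A Shi tableaux of size (n,m) equals the Fuss–Catalan number (1/(m(n+1)+1))·binom((m+1)(n+1), n+1); equivalently, (m(n+1)+1) times the cardinality of the set of type-A Shi tableaux of size (n,m) equals binom((m+1)(n+1), n+1). (Equivalently, the set P^m_n of type-A partitions of size (n,m) has this cardinality, and by the row-sum bijection so does the set of dominant regions of the m-Catalan arrangement Cat^m(A_n).) -/
attribute [local instance] Classical.propDecidable

namespace ShiFC

open Finset

def colsum (K : ℕ → ℕ → ℤ) (j : ℕ) : ℤ := ∑ i ∈ Finset.Icc 1 j, K i j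

def toMu (K : ℕ → ℕ → ℤ) : ℕ → ℕ := fun j => (colsum K j).toNat

def MSet (n m : ℕ) : Set (ℕ → ℕ) :=
  {μ | μ 0 = 0 ∧ (∀ j, n < j → μ j = 0) ∧
    ∀ j, 1 ≤ j → j ≤ n → μ (j-1) ≤ μ j ∧ μ j ≤ m * j}

def ValidCol (n m : ℕ) (K : ℕ → ℕ → ℤ) (c : ℕ → ℤ) : Prop :=
  (∀ i, 1 ≤ i → i ≤ n+1 → 0 ≤ c i ∧ c i ≤ (m:ℤ)) ∧
  (∀ i, ¬(1 ≤ i ∧ i ≤ n+1) → c i = 0) ∧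
  ∀ i l, 1 ≤ i → i ≤ l → l ≤ n →
    (K i l + c (l+1) < (m:ℤ) → c i - (K i l + c (l+1)) = 0 ∨ c i - (K i l + c (l+1)) = 1) ∧
    ((m:ℤ) ≤ K i l + c (l+1) → c i = (m:ℤ))

def glue (n : ℕ) (K : ℕ → ℕ → ℤ) (c : ℕ → ℤ) : ℕ → ℕ → ℤ :=
  fun i j => if j = n+1 then c i else K i j

def res (n : ℕ) (K : ℕ → ℕ → ℤ) : ℕ → ℕ → ℤ :=
  fun i j => if j ≤ n then K i j else 0

def csum (n : ℕ) (c : ℕ → ℤ) : ℤ := ∑ i ∈ Finset.Icc 1 (n+1), c i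

lemma res_mem {n m : ℕ} {K : ℕ → ℕ → ℤ} (hK : K ∈ ShiSet (n+1) m) :
    res n K ∈ ShiSet n m := by
  obtain ⟨⟨hb, hc⟩, hn0⟩ := hK
  refine ⟨⟨?_, ?_⟩, ?_⟩
  · intro i j h1 h2 h3
    simp only [res, if_pos h3]
    exact hb i j h1 h2 (by omega)
  · intro i l j h1 h2 h3 h4
    have hl : l ≤ n := by omega
    simp only [res, if_pos h4, if_pos hl]
    exact hc i l j h1 h2 h3 (by omega)
  · intro i j h
    by_cases hj : j ≤ n
    · simp only [res, if_pos hj]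
      exact hn0 i j (by omega)
    · simp only [res, if_neg hj]

lemma col_valid {n m : ℕ} {K : ℕ → ℕ → ℤ} (hK : K ∈ ShiSet (n+1) m) :
    ValidCol n m (res n K) (fun i => K i (n+1)) := by
  obtain ⟨⟨hb, hc⟩, hn0⟩ := hK
  refine ⟨?_, ?_, ?_⟩
  · intro i h1 h2; exact hb i (n+1) h1 h2 le_rfl
  · intro i h; exact hn0 i (n+1) (by omega)
  · intro i l h1 h2 h3
    have := hc i l (n+1) h1 h2 (by omega) le_rfl
    simpa [res, h3] using this

lemma glue_mem {n m : ℕ} {K : ℕ → ℕ → ℤ} {c : ℕ → ℤ} (hK : K ∈ ShiSet n m)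
    (hc : ValidCol n m K c) : glue n K c ∈ ShiSet (n+1) m := by
  obtain ⟨⟨hb, hcond⟩, hn0⟩ := hK
  obtain ⟨cb, cn0, ccond⟩ := hc
  refine ⟨⟨?_, ?_⟩, ?_⟩
  · intro i j h1 h2 h3
    by_cases hj : j = n+1
    · subst hj; simp only [glue, if_pos rfl]; exact cb i h1 h2
    · have hj' : j ≤ n := by omega
      simp only [glue, if_neg hj]; exact hb i j h1 h2 hj'
  · intro i l j h1 h2 h3 h4
    have hl : l ≤ n := by omega
    have hln : ¬ (l = n+1) := by omega
    by_cases hj : j = n+1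
    · subst hj
      simp only [glue, if_pos rfl, if_neg hln]
      exact ccond i l h1 h2 hl
    · have hj' : j ≤ n := by omega
      simp only [glue, if_neg hj, if_neg hln]
      exact hcond i l j h1 h2 h3 hj'
  · intro i j h
    by_cases hj : j = n+1
    · subst hj; simp only [glue, if_pos rfl]; exact cn0 i (by omega)
    · simp only [glue, if_neg hj]; exact hn0 i j (by omega)

lemma glue_res {n m : ℕ} {K : ℕ → ℕ → ℤ} (hK : K ∈ ShiSet (n+1) m) :
    glue n (res n K) (fun i => K i (n+1)) = K := by
  obtain ⟨_, hn0⟩ := hK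
  funext i j
  by_cases hj : j = n+1
  · subst hj; simp [glue]
  · by_cases hj' : j ≤ n
    · simp [glue, res, hj, hj']
    · have h0 : K i j = 0 := hn0 i j (by omega)
      simp [glue, res, hj, hj', h0]

lemma col_lt {n m : ℕ} {K : ℕ → ℕ → ℤ} {c c' : ℕ → ℤ}
    (hc : ValidCol n m K c) (hc' : ValidCol n m K c') {i0 : ℕ}
    (hi0a : 1 ≤ i0) (hi0b : i0 ≤ n+1) (hlt : c i0 < c' i0)
    (hagree : ∀ i, i0 < i → c i = c' i) :
    csum n c < csum n c' := by
  obtain ⟨cb, cn0, ccond⟩ := hc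
  obtain ⟨cb', cn0', ccond'⟩ := hc'
  have key : ∀ i ∈ Finset.Icc 1 (n+1), c i ≤ c' i := by
    intro i hi
    rw [Finset.mem_Icc] at hi
    rcases lt_trichotomy i i0 with h | h | h
    · have hi0' : i0 - 1 + 1 = i0 := by omega
      have h1 := ccond i (i0-1) hi.1 (by omega) (by omega)
      have h2 := ccond' i (i0-1) hi.1 (by omega) (by omega)
      rw [hi0'] at h1 h2
      by_cases hs : K i (i0-1) + c i0 < (m:ℤ)
      · have hub : c i ≤ K i (i0-1) + c i0 + 1 := by rcases h1.1 hs with h | h <;> omega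
        by_cases hs' : K i (i0-1) + c' i0 < (m:ℤ)
        · have := h2.1 hs'
          omega
        · have h3 := h2.2 (by omega)
          have h4 := (cb i hi.1 (by omega)).2
          omega
      · have h3 := h1.2 (by omega)
        have h4 := h2.2 (by omega)
        omega
    · subst h; omega
    · exact le_of_eq (hagree i h)
  exact Finset.sum_lt_sum key ⟨i0, Finset.mem_Icc.mpr ⟨hi0a, hi0b⟩, hlt⟩

lemma col_unique {n m : ℕ} {K : ℕ → ℕ → ℤ} {c c' : ℕ → ℤ}
    (hc : ValidCol n m K c) (hc' : ValidCol n m K c')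
    (hs : csum n c = csum n c') : c = c' := by
  by_contra hne
  have hex : ∃ i, (1 ≤ i ∧ i ≤ n+1) ∧ c i ≠ c' i := by
    by_contra h
    push_neg at h
    apply hne; funext i
    by_cases hi : 1 ≤ i ∧ i ≤ n+1
    · exact h i hi
    · rw [hc.2.1 i hi, hc'.2.1 i hi]
  obtain ⟨i1, hi1, hi1ne⟩ := hex
  set F := (Finset.Icc 1 (n+1)).filter (fun i => c i ≠ c' i) with hF
  have hFne : F.Nonempty := ⟨i1, by simp [hF, Finset.mem_filter, Finset.mem_Icc, hi1.1, hi1.2, hi1ne]⟩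
  obtain ⟨i0, hi0F, hmax⟩ := Finset.exists_max_image F id hFne
  rw [hF, Finset.mem_filter, Finset.mem_Icc] at hi0F
  have hagree : ∀ i, i0 < i → c i = c' i := by
    intro i hii
    by_cases hi : 1 ≤ i ∧ i ≤ n+1
    · by_contra hne2
      have : i ∈ F := by simp [hF, Finset.mem_filter, Finset.mem_Icc, hi.1, hi.2, hne2]
      have := hmax i this
      simp only [id] at this
      omega
    · rw [hc.2.1 i hi, hc'.2.1 i hi]
  rcases lt_or_gt_of_ne hi0F.2 with h | h
  · exact absurd hs (ne_of_lt (col_lt hc hc' hi0F.1.1 hi0F.1.2 h hagree))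
  · exact absurd hs.symm
      (ne_of_lt (col_lt hc' hc hi0F.1.1 hi0F.1.2 h (fun i hii => (hagree i hii).symm)))

lemma col_sum_lb {n m : ℕ} {K : ℕ → ℕ → ℤ} {c : ℕ → ℤ} (hK : K ∈ ShiSet n m)
    (hc : ValidCol n m K c) : colsum K n ≤ csum n c := by
  obtain ⟨cb, cn0, ccond⟩ := hc
  have hcn1 : 0 ≤ c (n+1) := (cb (n+1) (by omega) le_rfl).1
  have h1 : ∀ i ∈ Finset.Icc 1 n, K i n ≤ c i := by
    intro i hi
    rw [Finset.mem_Icc] at hi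
    have hcond := ccond i n hi.1 hi.2 le_rfl
    by_cases hs : K i n + c (n+1) < (m:ℤ)
    · rcases hcond.1 hs with h | h <;> omega
    · have h2 := hcond.2 (by omega)
      have h3 := (hK.1.1 i n hi.1 hi.2 le_rfl).2
      omega
  calc colsum K n ≤ ∑ i ∈ Finset.Icc 1 n, c i := Finset.sum_le_sum h1
    _ ≤ csum n c := by
        rw [csum, Finset.sum_Icc_succ_top (by omega : 1 ≤ n+1)]
        omega

lemma col_sum_ub {n m : ℕ} {K : ℕ → ℕ → ℤ} {c : ℕ → ℤ}
    (hc : ValidCol n m K c) : csum n c ≤ (m:ℤ) * (n+1) := by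
  have h1 : ∀ i ∈ Finset.Icc 1 (n+1), c i ≤ (m:ℤ) := by
    intro i hi
    rw [Finset.mem_Icc] at hi
    exact (hc.1 i hi.1 hi.2).2
  calc csum n c ≤ ∑ _i ∈ Finset.Icc 1 (n+1), (m:ℤ) := Finset.sum_le_sum h1
    _ = (m:ℤ) * (n+1) := by
        rw [Finset.sum_const, Nat.card_Icc]
        simp [mul_comm]


lemma col_min {n m : ℕ} {K : ℕ → ℕ → ℤ} (hK : K ∈ ShiSet n m) :
    ValidCol n m K (fun i => if 1 ≤ i ∧ i ≤ n then K i n else 0) ∧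
    csum n (fun i => if 1 ≤ i ∧ i ≤ n then K i n else 0) = colsum K n := by
  obtain ⟨⟨kb, kcond⟩, kn0⟩ := hK
  constructor
  · refine ⟨?_, ?_, ?_⟩
    · intro i h1 h2
      by_cases hi : 1 ≤ i ∧ i ≤ n
      · simp only [if_pos hi]; exact kb i n hi.1 hi.2 le_rfl
      · simp only [if_neg hi]
        exact ⟨le_rfl, by positivity⟩
    · intro i h
      have : ¬ (1 ≤ i ∧ i ≤ n) := by omega
      simp only [if_neg this]
    · intro i l h1 h2 h3
      have hii : 1 ≤ i ∧ i ≤ n := ⟨h1, le_trans h2 h3⟩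
      simp only [if_pos hii]
      by_cases hl : l = n
      · rw [hl]
        have hl1 : ¬ (1 ≤ n+1 ∧ n+1 ≤ n) := by omega
        simp only [if_neg hl1, add_zero]
        constructor
        · intro _; left; omega
        · intro hs
          have := (kb i n h1 hii.2 le_rfl).2
          omega
      · have hl1 : 1 ≤ l+1 ∧ l+1 ≤ n := by omega
        simp only [if_pos hl1]
        exact kcond i l n h1 h2 (by omega) le_rfl
  · rw [csum, Finset.sum_Icc_succ_top (by omega : 1 ≤ n+1)]
    have h1 : ¬ (1 ≤ n+1 ∧ n+1 ≤ n) := by omega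
    rw [if_neg h1, add_zero, colsum]
    apply Finset.sum_congr rfl
    intro i hi
    rw [Finset.mem_Icc] at hi
    rw [if_pos ⟨hi.1, hi.2⟩]

lemma col_increment {n m : ℕ} {K : ℕ → ℕ → ℤ} (hK : K ∈ ShiSet n m)
    {c : ℕ → ℤ} (hc : ValidCol n m K c) (hlt : csum n c < (m:ℤ)*(n+1)) :
    ∃ c', ValidCol n m K c' ∧ csum n c' = csum n c + 1 := by
  obtain ⟨cb, cn0, ccond⟩ := hc
  obtain ⟨⟨kb, kcond⟩, kn0⟩ := hK
  have hcn1 : c (n+1) < (m:ℤ) := by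
    by_contra h
    push_neg at h
    have hall : ∀ i ∈ Finset.Icc 1 (n+1), c i = (m:ℤ) := by
      intro i hi
      rw [Finset.mem_Icc] at hi
      rcases eq_or_lt_of_le hi.2 with he | hl
      · have := (cb (n+1) (by omega) le_rfl).2
        rw [he]; omega
      · have hin : i ≤ n := by omega
        have hK0 : 0 ≤ K i n := (kb i n hi.1 hin le_rfl).1
        exact (ccond i n hi.1 hin le_rfl).2 (by omega)
    rw [csum, Finset.sum_congr rfl hall, Finset.sum_const, Nat.card_Icc] at hlt
    simp only [Nat.add_sub_cancel, nsmul_eq_mul] at hlt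
    push_cast at hlt
    rw [mul_comm ((n:ℤ)+1) (m:ℤ)] at hlt
    exact lt_irrefl _ hlt
  classical
  set D := (Finset.Icc 1 (n+1)).filter
    (fun i => c i < (m:ℤ) ∧ ∀ l, i ≤ l → l ≤ n → c i ≠ K i l + c (l+1) + 1) with hD
  have hDmem : n+1 ∈ D := by
    rw [hD, Finset.mem_filter, Finset.mem_Icc]
    exact ⟨⟨by omega, le_rfl⟩, hcn1, fun l h1 h2 => by omega⟩
  obtain ⟨t, htD, htmin⟩ := Finset.exists_min_image D id ⟨n+1, hDmem⟩
  rw [hD, Finset.mem_filter, Finset.mem_Icc] at htD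
  obtain ⟨⟨ht1, ht2⟩, htm, htb⟩ := htD
  have step3 : ∀ i l, 1 ≤ i → i ≤ l → l ≤ n → c i < (m:ℤ) →
      K i l + c (l+1) < (m:ℤ) ∧ (c i = K i l + c (l+1) ∨ c i = K i l + c (l+1) + 1) := by
    intro i l h1 h2 h3 hcm
    have hcnd := ccond i l h1 h2 h3
    by_cases hs : K i l + c (l+1) < (m:ℤ)
    · refine ⟨hs, ?_⟩
      rcases hcnd.1 hs with h | h
      · left; omega
      · right; omega
    · exact absurd (hcnd.2 (by omega)) (by omega)
  have claimC : ∀ d i, 1 ≤ i → i < t → c i < (m:ℤ) → t - i ≤ d →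
      c i = K i (t-1) + c t + 1 := by
    intro d
    induction d with
    | zero => intro i h1 h2 _ hd; omega
    | succ d ih =>
      intro i h1 h2 hcm hd
      have hiD : i ∉ D := by
        intro hiD
        have := htmin i hiD
        simp only [id] at this
        omega
      rw [hD, Finset.mem_filter, Finset.mem_Icc] at hiD
      push_neg at hiD
      obtain ⟨l, hl1, hl2, hl3⟩ := hiD ⟨h1, by omega⟩ hcm
      have ht1' : t - 1 + 1 = t := by omega
      have hs2 := step3 i (t-1) h1 (by omega) (by omega) hcm
      rw [ht1'] at hs2
      rcases hs2.2 with hceq | hdone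
      · exfalso
        rcases lt_trichotomy (l+1) t with hu | hu | hu
        · have hKnn : 0 ≤ K i l := (kb i l h1 hl1 hl2).1
          have hcu : c (l+1) < (m:ℤ) := by omega
          have hIH := ih (l+1) (by omega) hu hcu (by omega)
          have hshi := kcond i l (t-1) h1 hl1 (by omega) (by omega)
          by_cases hσ : K i l + K (l+1) (t-1) < (m:ℤ)
          · rcases hshi.1 hσ with h | h <;> omega
          · have := hshi.2 (by omega)
            omega
        · have hl' : l = t - 1 := by omega
          rw [hl', ht1'] at hl3
          omega
        · have hs' := step3 t l ht1 (by omega) hl2 htm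
          have hnb : c t ≠ K t l + c (l+1) + 1 := htb l (by omega) hl2
          have hct : c t = K t l + c (l+1) := by
            rcases hs'.2 with h | h
            · exact h
            · exact absurd h hnb
          have hshi := kcond i (t-1) l h1 (by omega) (by omega) hl2
          rw [ht1'] at hshi
          by_cases hσ : K i (t-1) + K t l < (m:ℤ)
          · rcases hshi.1 hσ with h | h <;> omega
          · have hKm := hshi.2 (by omega)
            have hcl1 : 0 ≤ c (l+1) := (cb (l+1) (by omega) (by omega)).1
            have hcib : c i ≤ (m:ℤ) := (cb i h1 (by omega)).2
            omega
      · exact hdone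
  -- the incremented column
  set c' : ℕ → ℤ := fun i => if i = t then c t + 1 else c i with hc'def
  have hc't : c' t = c t + 1 := by simp [hc'def]
  have hc'ne : ∀ i, i ≠ t → c' i = c i := by intro i hi; simp [hc'def, hi]
  refine ⟨c', ⟨?_, ?_, ?_⟩, ?_⟩
  · intro i h1 h2
    by_cases hi : i = t
    · subst hi
      rw [hc't]
      have := (cb i h1 h2).1
      constructor <;> omega
    · rw [hc'ne i hi]; exact cb i h1 h2
  · intro i h
    have hi : i ≠ t := by omega
    rw [hc'ne i hi]; exact cn0 i h
  · intro i l h1 h2 h3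
    by_cases hit : i = t
    · subst hit
      have hlt' : l + 1 ≠ i := by omega
      rw [hc't, hc'ne (l+1) hlt']
      have hs3 := step3 i l h1 h2 h3 htm
      have hct : c i = K i l + c (l+1) := by
        rcases hs3.2 with h | h
        · exact h
        · exact absurd h (htb l h2 h3)
      constructor
      · intro _; right; omega
      · intro hs; omega
    · rw [hc'ne i hit]
      by_cases hl1t : l + 1 = t
      · rw [hl1t, hc't]
        by_cases hcim : c i < (m:ℤ)
        · have hC := claimC t i h1 (by omega) hcim (by omega)
          have hl' : t - 1 = l := by omega
          rw [hl'] at hC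
          have hs3 := step3 i l h1 h2 h3 hcim
          rw [hl1t] at hs3
          constructor
          · intro _; left; omega
          · intro hs; omega
        · have hcim' : c i = (m:ℤ) := by
            have := (cb i h1 (by omega)).2
            omega
          have hcnd := ccond i l h1 h2 h3
          rw [hl1t] at hcnd
          by_cases hs : K i l + c t < (m:ℤ)
          · have := hcnd.1 hs
            exact ⟨fun h2s => by omega, fun _ => hcim'⟩
          · have := hcnd.2 (by omega)
            exact ⟨fun h2s => by omega, fun _ => hcim'⟩
      · rw [hc'ne (l+1) hl1t]
        exact ccond i l h1 h2 h3
  · have hsplit : ∀ i, c' i = c i + (if i = t then 1 else 0) := by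
      intro i
      by_cases h : i = t
      · subst h; rw [hc't]; simp
      · rw [hc'ne i h]; simp [h]
    rw [csum, Finset.sum_congr rfl (fun i _ => hsplit i), Finset.sum_add_distrib]
    rw [Finset.sum_ite_eq' (Finset.Icc 1 (n+1)) t (fun _ => (1:ℤ))]
    rw [if_pos (Finset.mem_Icc.mpr ⟨ht1, ht2⟩)]
    rfl
lemma col_exists {n m : ℕ} {K : ℕ → ℕ → ℤ} (hK : K ∈ ShiSet n m) (s : ℤ)
    (h1 : colsum K n ≤ s) (h2 : s ≤ (m:ℤ) * (n+1)) :
    ∃ c, ValidCol n m K c ∧ csum n c = s := by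
  have key : ∀ t : ℕ, colsum K n + t ≤ (m:ℤ) * (n+1) →
      ∃ c, ValidCol n m K c ∧ csum n c = colsum K n + t := by
    intro t
    induction t with
    | zero =>
      intro _
      obtain ⟨hv, hs⟩ := col_min hK
      exact ⟨_, hv, by rw [hs]; ring⟩
    | succ t ih =>
      intro hub
      obtain ⟨c, hcv, hcs⟩ := ih (by push_cast at hub ⊢; omega)
      obtain ⟨c', hcv', hcs'⟩ := col_increment hK hcv (by push_cast at hub ⊢; omega)
      exact ⟨c', hcv', by rw [hcs', hcs]; push_cast; ring⟩
  obtain ⟨t, ht⟩ : ∃ t : ℕ, s = colsum K n + t := ⟨(s - colsum K n).toNat, by omega⟩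
  subst ht
  exact key t h2


lemma toMu_apply (K : ℕ → ℕ → ℤ) (j : ℕ) : toMu K j = (colsum K j).toNat := rfl

lemma colsum_nonneg {n m : ℕ} {K : ℕ → ℕ → ℤ} (hK : K ∈ ShiSet n m) (j : ℕ) :
    0 ≤ colsum K j := by
  apply Finset.sum_nonneg
  intro i hi
  rw [Finset.mem_Icc] at hi
  by_cases hj : j ≤ n
  · exact (hK.1.1 i j hi.1 hi.2 hj).1
  · rw [hK.2 i j (by omega)]

lemma toMu_cast {n m : ℕ} {K : ℕ → ℕ → ℤ} (hK : K ∈ ShiSet n m) (j : ℕ) :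
    ((toMu K j : ℤ)) = colsum K j := Int.toNat_of_nonneg (colsum_nonneg hK j)

lemma colsum_le {n m : ℕ} {K : ℕ → ℕ → ℤ} (hK : K ∈ ShiSet n m) {j : ℕ} (hj : j ≤ n) :
    colsum K j ≤ (m:ℤ) * j := by
  have h1 : ∀ i ∈ Finset.Icc 1 j, K i j ≤ (m:ℤ) := fun i hi => by
    rw [Finset.mem_Icc] at hi
    exact (hK.1.1 i j hi.1 hi.2 hj).2
  calc colsum K j ≤ ∑ _i ∈ Finset.Icc 1 j, (m:ℤ) := Finset.sum_le_sum h1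
    _ = (m:ℤ)*j := by rw [Finset.sum_const, Nat.card_Icc]; simp [mul_comm]

lemma colsum_res_le {n : ℕ} (K : ℕ → ℕ → ℤ) {j : ℕ} (hj : j ≤ n) :
    colsum (res n K) j = colsum K j := by
  apply Finset.sum_congr rfl
  intro i _
  simp [res, hj]

lemma colsum_res_gt {n : ℕ} (K : ℕ → ℕ → ℤ) {j : ℕ} (hj : n < j) :
    colsum (res n K) j = 0 := by
  apply Finset.sum_eq_zero
  intro i _
  simp only [res, if_neg (by omega : ¬ j ≤ n)]

lemma colsum_glue_le {n : ℕ} (K : ℕ → ℕ → ℤ) (c : ℕ → ℤ) {j : ℕ} (hj : j ≤ n) :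
    colsum (glue n K c) j = colsum K j := by
  apply Finset.sum_congr rfl
  intro i _
  simp only [glue, if_neg (by omega : ¬ j = n+1)]

lemma colsum_glue_top {n : ℕ} (K : ℕ → ℕ → ℤ) (c : ℕ → ℤ) :
    colsum (glue n K c) (n+1) = csum n c := by
  apply Finset.sum_congr rfl
  intro i _
  simp [glue]

lemma colsum_glue_gt {n m : ℕ} {K : ℕ → ℕ → ℤ} (hK : K ∈ ShiSet n m) (c : ℕ → ℤ)
    {j : ℕ} (hj : n+1 < j) : colsum (glue n K c) j = 0 := by
  apply Finset.sum_eq_zero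
  intro i _
  simp only [glue, if_neg (by omega : ¬ j = n+1)]
  exact hK.2 i j (by omega)

lemma hresMu {n : ℕ} (K : ℕ → ℕ → ℤ) :
    toMu (res n K) = fun j => if j ≤ n then toMu K j else 0 := by
  funext j
  by_cases hj : j ≤ n
  · rw [if_pos hj, toMu_apply, toMu_apply, colsum_res_le K hj]
  · rw [if_neg hj, toMu_apply, colsum_res_gt K (by omega)]
    rfl

theorem main_bij (m n : ℕ) :
    Set.InjOn toMu (ShiSet n m) ∧ toMu '' (ShiSet n m) = MSet n m := by
  induction n with
  | zero =>
    have hzero : ∀ K ∈ ShiSet 0 m, K = (fun _ _ => (0:ℤ)) := by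
      intro K hK; funext i j; exact hK.2 i j (by omega)
    have hmem0 : (fun _ _ => (0:ℤ)) ∈ ShiSet 0 m := by
      refine ⟨⟨?_, ?_⟩, ?_⟩
      · intro i j h1 h2 h3; exact ⟨le_rfl, by positivity⟩
      · intro i l j h1 h2 h3 h4; omega
      · intro i j h; rfl
    constructor
    · intro K1 h1 K2 h2 _
      rw [hzero K1 h1, hzero K2 h2]
    · ext μ
      constructor
      · rintro ⟨K, hK, rfl⟩
        rw [hzero K hK]
        refine ⟨?_, ?_, ?_⟩
        · simp [toMu_apply, colsum]
        · intro j hj; simp [toMu_apply, colsum]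
        · intro j h1 h2; omega
      · intro ⟨h0, hgt, _⟩
        refine ⟨(fun _ _ => (0:ℤ)), hmem0, ?_⟩
        funext j
        rcases Nat.eq_zero_or_pos j with hj | hj
        · subst hj
          simp only [toMu_apply, colsum]
          rw [h0]
          rfl
        · rw [hgt j hj]
          simp [toMu_apply, colsum]
  | succ n ih =>
    obtain ⟨ihInj, ihIm⟩ := ih
    have hsub1 : ∀ K ∈ ShiSet (n+1) m, toMu K ∈ MSet (n+1) m := by
      intro K hK
      have hres := res_mem hK
      have hresM : toMu (res n K) ∈ MSet n m := by
        rw [← ihIm]; exact Set.mem_image_of_mem _ hres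
      obtain ⟨h0, hgt, hstep⟩ := hresM
      have hcv := col_valid hK
      refine ⟨?_, ?_, ?_⟩
      · simp [toMu_apply, colsum]
      · intro j hj
        have hz : colsum K j = 0 := Finset.sum_eq_zero (fun i _ => hK.2 i j (by omega))
        simp [toMu_apply, hz]
      · intro j hj1 hj2
        constructor
        · rcases Nat.lt_or_ge j (n+1) with hj | hj
          · have h1 := (hstep j hj1 (by omega)).1
            rw [hresMu K] at h1
            simp only [if_pos (by omega : j - 1 ≤ n), if_pos (by omega : j ≤ n)] at h1
            exact h1
          · have hj' : j = n+1 := by omega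
            subst hj'
            have hlb := col_sum_lb hres hcv
            rw [colsum_res_le K le_rfl] at hlb
            have hcs : csum n (fun i => K i (n+1)) = colsum K (n+1) := rfl
            rw [hcs] at hlb
            simp only [toMu_apply]
            have he : (n+1) - 1 = n := by omega
            rw [he]
            exact Int.toNat_le_toNat hlb
        · simp only [toMu_apply]
          rw [Int.toNat_le]
          push_cast
          exact colsum_le hK hj2
    constructor
    · intro K1 h1 K2 h2 heq
      have hres12 : res n K1 = res n K2 := by
        apply ihInj (res_mem h1) (res_mem h2)
        rw [hresMu K1, hresMu K2, heq]
      have hv1 := col_valid h1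
      have hv2 := col_valid h2
      rw [← hres12] at hv2
      have hsum : csum n (fun i => K1 i (n+1)) = csum n (fun i => K2 i (n+1)) := by
        have hcs1 : csum n (fun i => K1 i (n+1)) = colsum K1 (n+1) := rfl
        have hcs2 : csum n (fun i => K2 i (n+1)) = colsum K2 (n+1) := rfl
        rw [hcs1, hcs2, ← toMu_cast h1 (n+1), ← toMu_cast h2 (n+1), heq]
      have hcols := col_unique hv1 hv2 hsum
      have e1 := glue_res h1
      have e2 := glue_res h2
      rw [← e1, ← e2, hres12, hcols]
    · apply Set.eq_of_subset_of_subset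
      · rintro μ ⟨K, hK, rfl⟩
        exact hsub1 K hK
      · intro μ hμ
        obtain ⟨h0, hgt, hstep⟩ := hμ
        set μ' : ℕ → ℕ := fun j => if j ≤ n then μ j else 0 with hμ'def
        have hμ'M : μ' ∈ MSet n m := by
          refine ⟨?_, ?_, ?_⟩
          · simp only [hμ'def]
            rw [if_pos (by omega : (0:ℕ) ≤ n)]
            exact h0
          · intro j hj
            simp only [hμ'def]
            rw [if_neg (by omega)]
          · intro j hj1 hj2
            constructor
            · simp only [hμ'def]
              rw [if_pos (by omega : j - 1 ≤ n), if_pos hj2]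
              exact (hstep j hj1 (by omega)).1
            · simp only [hμ'def]
              rw [if_pos hj2]
              exact (hstep j hj1 (by omega)).2
        rw [← ihIm] at hμ'M
        obtain ⟨K', hK', hK'μ⟩ := hμ'M
        have hcoln : colsum K' n = (μ n : ℤ) := by
          rw [← toMu_cast hK' n, hK'μ]
          simp only [hμ'def]
          rw [if_pos le_rfl]
        have hmono := (hstep (n+1) (by omega) le_rfl).1
        have hbd := (hstep (n+1) (by omega) le_rfl).2
        have he : (n+1) - 1 = n := by omega
        rw [he] at hmono
        obtain ⟨c, hcv, hcs⟩ := col_exists hK' ((μ (n+1) : ℤ))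
          (by rw [hcoln]; exact_mod_cast hmono)
          (by push_cast; exact_mod_cast hbd)
        refine ⟨glue n K' c, glue_mem hK' hcv, ?_⟩
        funext j
        rcases Nat.lt_or_ge j (n+1) with hj | hj
        · rw [toMu_apply, colsum_glue_le K' c (by omega)]
          rw [← toMu_apply, hK'μ]
          simp only [hμ'def]
          rw [if_pos (by omega : j ≤ n)]
        · rcases Nat.eq_or_lt_of_le hj with hj' | hj'
          · subst hj'
            rw [toMu_apply, colsum_glue_top K' c, hcs]
            simp
          · rw [toMu_apply, colsum_glue_gt hK' c hj']
            rw [hgt j (by omega)]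
            rfl


def wt (L : ℕ) (S : Finset ℕ) (m : ℕ) : ℕ → ℤ := fun x => if x % L ∈ S then (m:ℤ) else -1

def goodAt (L : ℕ) (S : Finset ℕ) (m : ℕ) (a : ℕ) : Prop :=
  ∀ t, 1 ≤ t → t < L → 0 ≤ ∑ x ∈ Finset.Ico a (a+t), wt L S m x

section Cyc

variable {L m p : ℕ} {S : Finset ℕ}

lemma wt_period (hL : 0 < L) (S : Finset ℕ) (m x : ℕ) : wt L S m (x + L) = wt L S m x := by
  simp [wt, Nat.add_mod_right]

lemma sum_wt_prefix (hS : S ⊆ Finset.range L) {t : ℕ} (ht : t ≤ L) :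
    ∑ x ∈ Finset.range t, wt L S m x = (m+1:ℤ) * ((S.filter (· < t)).card) - t := by
  have h1 : ∀ x ∈ Finset.range t, wt L S m x = (if x ∈ S then (m+1:ℤ) else 0) - 1 := by
    intro x hx
    rw [Finset.mem_range] at hx
    simp only [wt, Nat.mod_eq_of_lt (by omega : x < L)]
    by_cases h : x ∈ S <;> simp [h]
  rw [Finset.sum_congr rfl h1, Finset.sum_sub_distrib, Finset.sum_ite_mem]
  have h2 : Finset.range t ∩ S = S.filter (· < t) := by
    ext x
    simp [Finset.mem_inter, Finset.mem_range, Finset.mem_filter, and_comm]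
  rw [h2, Finset.sum_const, Finset.sum_const, Finset.card_range]
  push_cast
  ring

lemma sum_wt_range (hL : 0 < L) (hS : S ⊆ Finset.range L) (hcard : S.card = p)
    (hLp : L = (m+1)*p+1) :
    ∑ x ∈ Finset.range L, wt L S m x = -1 := by
  rw [sum_wt_prefix hS le_rfl]
  have h2 : S.filter (· < L) = S := by
    apply Finset.filter_true_of_mem
    intro x hx
    exact Finset.mem_range.mp (hS hx)
  rw [h2, hcard, hLp]
  push_cast
  ring

lemma sum_wt_Ico_period (hL : 0 < L) (hS : S ⊆ Finset.range L) (hcard : S.card = p)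
    (hLp : L = (m+1)*p+1) (a : ℕ) :
    ∑ x ∈ Finset.Ico a (a+L), wt L S m x = -1 := by
  induction a with
  | zero =>
    rw [Nat.zero_add, ← Finset.range_eq_Ico]
    exact sum_wt_range hL hS hcard hLp
  | succ a ih =>
    have e1 : ∑ x ∈ Finset.Ico a (a+L+1), wt L S m x
        = (∑ x ∈ Finset.Ico a (a+L), wt L S m x) + wt L S m (a+L) :=
      Finset.sum_Ico_succ_top (by omega) _
    have e2 : ∑ x ∈ Finset.Ico a (a+L+1), wt L S m x
        = wt L S m a + ∑ x ∈ Finset.Ico (a+1) (a+L+1), wt L S m x :=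
      Finset.sum_eq_sum_Ico_succ_bot (by omega) _
    have e3 : wt L S m (a+L) = wt L S m a := wt_period hL S m a
    have e4 : a+1+L = a+L+1 := by omega
    rw [e4, ← ih]
    omega

/-- the `H` function whose strict argmin marks the unique good rotation -/
def Hf (L : ℕ) (S : Finset ℕ) (m : ℕ) (a : ℕ) : ℤ :=
  L * (∑ x ∈ Finset.range a, wt L S m x) + a

lemma sum_range_split (f : ℕ → ℤ) (a b : ℕ) :
    ∑ x ∈ Finset.range (a+b), f x = (∑ x ∈ Finset.range a, f x) + ∑ x ∈ Finset.Ico a (a+b), f x := by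
  rw [Finset.range_eq_Ico]
  rw [Finset.range_eq_Ico]
  exact (Finset.sum_Ico_consecutive f (Nat.zero_le a) (Nat.le_add_right a b)).symm

lemma Hf_period (hL : 0 < L) (hS : S ⊆ Finset.range L) (hcard : S.card = p)
    (hLp : L = (m+1)*p+1) (a : ℕ) : Hf L S m (a + L) = Hf L S m a := by
  unfold Hf
  rw [sum_range_split, sum_wt_Ico_period hL hS hcard hLp a]
  push_cast
  ring

lemma Hf_period_mul (hL : 0 < L) (hS : S ⊆ Finset.range L) (hcard : S.card = p)
    (hLp : L = (m+1)*p+1) (k a : ℕ) : Hf L S m (a + k*L) = Hf L S m a := by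
  induction k with
  | zero => simp
  | succ k ih =>
    have : a + (k+1)*L = (a + k*L) + L := by ring
    rw [this, Hf_period hL hS hcard hLp, ih]

lemma Hf_mod (hL : 0 < L) (hS : S ⊆ Finset.range L) (hcard : S.card = p)
    (hLp : L = (m+1)*p+1) (a : ℕ) : Hf L S m a = Hf L S m (a % L) := by
  conv_lhs => rw [show a = a % L + (a / L) * L by rw [Nat.mod_add_div']]
  rw [Hf_period_mul hL hS hcard hLp]

lemma Hf_inj (hL : 0 < L) {a b : ℕ} (ha : a < L) (hb : b < L)
    (hH : Hf L S m a = Hf L S m b) : a = b := by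
  unfold Hf at hH
  have hdvd : (L:ℤ) ∣ ((a:ℤ) - b) :=
    ⟨(∑ x ∈ Finset.range b, wt L S m x) - ∑ x ∈ Finset.range a, wt L S m x, by linarith⟩
  have habs : |(a:ℤ) - b| < L := by
    rw [abs_lt]
    constructor <;> push_cast <;> omega
  have := Int.eq_zero_of_abs_lt_dvd hdvd habs
  omega

lemma goodAt_iff_Hf (hL : 0 < L) (a : ℕ) :
    goodAt L S m a ↔ ∀ t, 1 ≤ t → t < L → Hf L S m a < Hf L S m (a + t) := by
  have key : ∀ t : ℕ, Hf L S m (a+t) - Hf L S m a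
      = L * (∑ x ∈ Finset.Ico a (a+t), wt L S m x) + t := by
    intro t
    unfold Hf
    rw [sum_range_split]
    push_cast
    ring
  constructor
  · intro hg t h1 h2
    have h3 := hg t h1 h2
    have h4 := key t
    have h5 : (0:ℤ) ≤ L * (∑ x ∈ Finset.Ico a (a+t), wt L S m x) :=
      mul_nonneg (by positivity) h3
    omega
  · intro hg t h1 h2
    have h3 := hg t h1 h2
    have h4 := key t
    by_contra hneg
    push_neg at hneg
    have h5 : ∑ x ∈ Finset.Ico a (a+t), wt L S m x ≤ -1 := by omega
    have h6 : (L:ℤ) * (∑ x ∈ Finset.Ico a (a+t), wt L S m x) ≤ L * (-1) := by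
      apply mul_le_mul_of_nonneg_left h5 (by positivity)
    omega

lemma exists_goodAt (hL : 0 < L) (hS : S ⊆ Finset.range L) (hcard : S.card = p)
    (hLp : L = (m+1)*p+1) : ∃ a, a < L ∧ goodAt L S m a := by
  obtain ⟨a, haR, hmin⟩ := Finset.exists_min_image (Finset.range L) (Hf L S m)
    ⟨0, Finset.mem_range.mpr hL⟩
  rw [Finset.mem_range] at haR
  refine ⟨a, haR, (goodAt_iff_Hf hL a).mpr ?_⟩
  intro t h1 h2
  have hb : Hf L S m (a+t) = Hf L S m ((a+t) % L) := Hf_mod hL hS hcard hLp _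
  set b := (a+t) % L with hbdef
  have hbL : b < L := Nat.mod_lt _ hL
  have hne : b ≠ a := by
    rcases Nat.lt_or_ge (a+t) L with h | h
    · rw [hbdef, Nat.mod_eq_of_lt h]; omega
    · have : b = a + t - L := by
        rw [hbdef, Nat.mod_eq_sub_mod h, Nat.mod_eq_of_lt (by omega)]
      omega
  have hle := hmin b (Finset.mem_range.mpr hbL)
  have hneq : Hf L S m a ≠ Hf L S m b := fun h => hne ((Hf_inj hL hbL haR h.symm))
  rw [hb]
  omega

lemma goodAt_unique (hL : 0 < L) (hS : S ⊆ Finset.range L) (hcard : S.card = p)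
    (hLp : L = (m+1)*p+1) {a a' : ℕ} (ha : a < L) (ha' : a' < L)
    (hg : goodAt L S m a) (hg' : goodAt L S m a') : a = a' := by
  rcases lt_trichotomy a a' with h | h | h
  · exfalso
    have h1 := (goodAt_iff_Hf hL a).mp hg (a' - a) (by omega) (by omega)
    have h2 := (goodAt_iff_Hf hL a').mp hg' (a + L - a') (by omega) (by omega)
    rw [show a + (a' - a) = a' by omega] at h1
    rw [show a' + (a + L - a') = a + L by omega, Hf_period hL hS hcard hLp] at h2
    omega
  · exact h
  · exfalso
    have h1 := (goodAt_iff_Hf hL a').mp hg' (a - a') (by omega) (by omega)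
    have h2 := (goodAt_iff_Hf hL a).mp hg (a' + L - a) (by omega) (by omega)
    rw [show a' + (a - a') = a by omega] at h1
    rw [show a + (a' + L - a) = a' + L by omega, Hf_period hL hS hcard hLp] at h2
    omega


end Cyc

def rot (L a : ℕ) (S : Finset ℕ) : Finset ℕ := S.image (fun x => (x + a) % L)

section Rot

variable {L m p a : ℕ} {S : Finset ℕ}

lemma rot_subset (hL : 0 < L) : rot L a S ⊆ Finset.range L := by
  intro y hy
  rw [rot, Finset.mem_image] at hy
  obtain ⟨x, _, rfl⟩ := hy
  exact Finset.mem_range.mpr (Nat.mod_lt _ hL)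

lemma rot_card (hS : S ⊆ Finset.range L) : (rot L a S).card = S.card := by
  apply Finset.card_image_of_injOn
  intro x hx x' hx' h
  have hxL : x < L := Finset.mem_range.mp (hS hx)
  have hx'L : x' < L := Finset.mem_range.mp (hS hx')
  have h2 : x % L = x' % L := Nat.ModEq.add_right_cancel' a h
  rwa [Nat.mod_eq_of_lt hxL, Nat.mod_eq_of_lt hx'L] at h2

lemma mem_rot (hS : S ⊆ Finset.range L) (y : ℕ) :
    (y + a) % L ∈ rot L a S ↔ y % L ∈ S := by
  constructor
  · intro h
    rw [rot, Finset.mem_image] at h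
    obtain ⟨x, hx, hxe⟩ := h
    have hxL : x < L := Finset.mem_range.mp (hS hx)
    have h2 : x % L = y % L := Nat.ModEq.add_right_cancel' a hxe
    rw [Nat.mod_eq_of_lt hxL] at h2
    rwa [← h2]
  · intro h
    rw [rot, Finset.mem_image]
    exact ⟨y % L, h, Nat.mod_add_mod y L a⟩

lemma wt_rot (hL : 0 < L) (hS : S ⊆ Finset.range L) (y : ℕ) :
    wt L (rot L a S) m (y + a) = wt L S m y := by
  unfold wt
  by_cases h : y % L ∈ S
  · rw [if_pos ((mem_rot hS y).mpr h), if_pos h]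
  · rw [if_neg (fun hc => h ((mem_rot hS y).mp hc)), if_neg h]

lemma goodAt_rot (hL : 0 < L) (hS : S ⊆ Finset.range L) (b : ℕ) :
    goodAt L (rot L a S) m (b + a) ↔ goodAt L S m b := by
  have key : ∀ t, ∑ x ∈ Finset.Ico (b+a) (b+a+t), wt L (rot L a S) m x
      = ∑ x ∈ Finset.Ico b (b+t), wt L S m x := by
    intro t
    rw [Finset.sum_Ico_eq_sum_range, Finset.sum_Ico_eq_sum_range]
    rw [show b+a+t-(b+a) = t by omega, show b+t-b = t by omega]
    apply Finset.sum_congr rfl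
    intro i _
    rw [show b + a + i = (b+i) + a by ring, wt_rot hL hS (b+i)]
  constructor
  · intro hg t h1 h2
    have h3 := hg t h1 h2
    rwa [key t] at h3
  · intro hg t h1 h2
    rw [key t]
    exact hg t h1 h2

lemma goodAt_add_L (hL : 0 < L) (T : Finset ℕ) (b : ℕ) :
    goodAt L T m (b + L) ↔ goodAt L T m b := by
  have key : ∀ t, ∑ x ∈ Finset.Ico (b+L) (b+L+t), wt L T m x
      = ∑ x ∈ Finset.Ico b (b+t), wt L T m x := by
    intro t
    rw [Finset.sum_Ico_eq_sum_range, Finset.sum_Ico_eq_sum_range]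
    rw [show b+L+t-(b+L) = t by omega, show b+t-b = t by omega]
    apply Finset.sum_congr rfl
    intro i _
    rw [show b + L + i = (b+i) + L by ring, wt_period hL]
  constructor
  · intro hg t h1 h2
    have h3 := hg t h1 h2
    rwa [key t] at h3
  · intro hg t h1 h2
    rw [key t]
    exact hg t h1 h2

lemma rot_rot (hL : 0 < L) (hS : S ⊆ Finset.range L) (ha : a ≤ L) :
    rot L (L - a) (rot L a S) = S := by
  rw [rot, rot, Finset.image_image]
  have h1 : ∀ x ∈ S, ((x + a) % L + (L - a)) % L = x := by
    intro x hx
    have hxL : x < L := Finset.mem_range.mp (hS hx)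
    rw [Nat.mod_add_mod]
    rw [show x + a + (L - a) = x + L by omega]
    rw [Nat.add_mod_right, Nat.mod_eq_of_lt hxL]
  have h2 : S.image ((fun y => (y + (L-a)) % L) ∘ (fun x => (x + a) % L)) = S.image id := by
    apply Finset.image_congr
    intro x hx
    exact h1 x hx
  rw [h2, Finset.image_id]

end Rot

attribute [local instance] Classical.propDecidable

theorem cycle_card (m p : ℕ) (hp : 1 ≤ p) :
    ((m+1)*p+1) * (((Finset.range ((m+1)*p+1)).powersetCard p).filter
        (fun S => goodAt ((m+1)*p+1) S m 0)).card
      = Nat.choose ((m+1)*p+1) p := by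
  classical
  set L := (m+1)*p+1 with hLdef
  have hL : 0 < L := by omega
  set W := (Finset.range L).powersetCard p with hWdef
  set G := W.filter (fun S => goodAt L S m 0) with hGdef
  have key : (G ×ˢ Finset.range L).card = W.card := by
    apply Finset.card_bij (fun x _ => rot L x.2 x.1)
    · rintro ⟨T, a⟩ hx
      rw [Finset.mem_product] at hx
      obtain ⟨hT, haR⟩ := hx
      rw [hGdef, Finset.mem_filter, hWdef, Finset.mem_powersetCard] at hT
      obtain ⟨⟨hTsub, hTcard⟩, hTg⟩ := hT
      rw [hWdef, Finset.mem_powersetCard]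
      exact ⟨rot_subset hL, by rw [rot_card hTsub, hTcard]⟩
    · rintro ⟨T, a⟩ hx ⟨T', a'⟩ hx' heq
      rw [Finset.mem_product] at hx hx'
      obtain ⟨hT, haR⟩ := hx
      obtain ⟨hT', haR'⟩ := hx'
      rw [Finset.mem_range] at haR haR'
      rw [hGdef, Finset.mem_filter, hWdef, Finset.mem_powersetCard] at hT hT'
      obtain ⟨⟨hTsub, hTcard⟩, hTg⟩ := hT
      obtain ⟨⟨hT'sub, hT'card⟩, hT'g⟩ := hT'
      dsimp only at heq hTsub hTcard hTg hT'sub hT'card hT'g haR haR'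
      have hga : goodAt L (rot L a T) m a := by
        have h0 := (goodAt_rot (a := a) hL hTsub 0).mpr hTg
        rwa [Nat.zero_add] at h0
      have hga' : goodAt L (rot L a' T') m a' := by
        have h0 := (goodAt_rot (a := a') hL hT'sub 0).mpr hT'g
        rwa [Nat.zero_add] at h0
      rw [← heq] at hga'
      have hrsub : rot L a T ⊆ Finset.range L := rot_subset hL
      have hrcard : (rot L a T).card = p := by rw [rot_card hTsub, hTcard]
      have hae : a = a' := goodAt_unique hL hrsub hrcard hLdef haR haR' hga hga'
      subst hae
      have hTT : T = T' := by
        have e1 := rot_rot hL hTsub (le_of_lt haR)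
        have e2 := rot_rot hL hT'sub (le_of_lt haR)
        rw [← e1, ← e2, heq]
      rw [Prod.mk.injEq]
      exact ⟨hTT, rfl⟩
    · intro S hSW
      rw [hWdef, Finset.mem_powersetCard] at hSW
      obtain ⟨hSsub, hScard⟩ := hSW
      obtain ⟨aa, haL, hag⟩ := exists_goodAt hL hSsub hScard hLdef
      refine ⟨(rot L (L - aa) S, aa), ?_, ?_⟩
      · rw [Finset.mem_product]
        constructor
        · rw [hGdef, Finset.mem_filter]
          constructor
          · rw [hWdef, Finset.mem_powersetCard]
            exact ⟨rot_subset hL, by rw [rot_card hSsub, hScard]⟩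
          · have h1 : goodAt L (rot L (L-aa) S) m (aa + (L - aa)) ↔ goodAt L S m aa :=
              goodAt_rot hL hSsub aa
            rw [show aa + (L - aa) = 0 + L by omega] at h1
            exact (goodAt_add_L hL _ 0).mp (h1.mpr hag)
        · exact Finset.mem_range.mpr haL
      · have h5 := rot_rot hL hSsub (Nat.sub_le L aa)
        rwa [Nat.sub_sub_self (le_of_lt haL)] at h5
  rw [Finset.card_product, Finset.card_range, hWdef, Finset.card_powersetCard,
    Finset.card_range] at key
  rw [mul_comm]
  exact key


section Encode

variable {n m : ℕ}

def encode (n : ℕ) (μ : ℕ → ℕ) : Finset ℕ := (Finset.range (n+1)).image (fun j => j + μ j)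

lemma mset_mono {μ : ℕ → ℕ} (hμ : μ ∈ MSet n m) :
    ∀ j', j' ≤ n → ∀ j, j ≤ j' → μ j ≤ μ j' := by
  intro j'
  induction j' with
  | zero =>
    intro _ j hj
    have h0 : j = 0 := by omega
    have h1 : μ j = μ 0 := by rw [h0]
    exact le_of_eq h1
  | succ k ih =>
    intro hk j hj
    rcases Nat.eq_or_lt_of_le hj with he | hl
    · rw [he]
    · have h1 : μ j ≤ μ k := ih (by omega) j (by omega)
      have h2 := (hμ.2.2 (k+1) (by omega) hk).1
      simp only [Nat.add_sub_cancel] at h2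
      omega

lemma mset_bound {μ : ℕ → ℕ} (hμ : μ ∈ MSet n m) {j : ℕ} (hj : j ≤ n) : μ j ≤ m * j := by
  rcases Nat.eq_zero_or_pos j with h | h
  · rw [h, hμ.1]
    omega
  · exact (hμ.2.2 j h hj).2

lemma encode_strictmono {μ : ℕ → ℕ} (hμ : μ ∈ MSet n m) {j j' : ℕ} (h : j < j') (hj' : j' ≤ n) :
    j + μ j < j' + μ j' := by
  have := mset_mono hμ j' hj' j (le_of_lt h)
  omega

lemma encode_subset {μ : ℕ → ℕ} (hμ : μ ∈ MSet n m) :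
    encode n μ ⊆ Finset.range ((m+1)*(n+1)+1) := by
  intro x hx
  rw [encode, Finset.mem_image] at hx
  obtain ⟨j, hj, rfl⟩ := hx
  rw [Finset.mem_range] at hj
  rw [Finset.mem_range]
  have h1 : μ j ≤ m * j := mset_bound hμ (by omega)
  have h2 : m * j ≤ m * n := Nat.mul_le_mul_left m (by omega)
  have h3 : (m+1)*(n+1) = m*n + m + n + 1 := by ring
  omega

lemma encode_card {μ : ℕ → ℕ} (hμ : μ ∈ MSet n m) : (encode n μ).card = n+1 := by
  rw [encode, Finset.card_image_of_injOn, Finset.card_range]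
  intro j hj j' hj' he
  rw [Finset.mem_coe, Finset.mem_range] at hj hj'
  have he' : j + μ j = j' + μ j' := he
  clear he
  rename' he' => he
  by_contra hne
  rcases lt_or_gt_of_ne hne with h | h
  · have := encode_strictmono hμ h (by omega); omega
  · have := encode_strictmono hμ h (by omega); omega

lemma encode_good {μ : ℕ → ℕ} (hμ : μ ∈ MSet n m) :
    goodAt ((m+1)*(n+1)+1) (encode n μ) m 0 := by
  intro t h1 h2
  have e0 : Finset.Ico (0:ℕ) (0+t) = Finset.range t := by
    rw [Nat.zero_add, Finset.range_eq_Ico]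
  rw [e0, sum_wt_prefix (encode_subset hμ) (by omega)]
  set A := (Finset.range (n+1)).filter (fun j => j + μ j < t) with hA
  have hfilter : (encode n μ).filter (· < t) = A.image (fun j => j + μ j) := by
    rw [encode, hA, Finset.filter_image]
  have hcard : ((encode n μ).filter (· < t)).card = A.card := by
    rw [hfilter]
    apply Finset.card_image_of_injOn
    intro j hj j' hj' he
    rw [Finset.mem_coe, hA, Finset.mem_filter, Finset.mem_range] at hj hj'
    have he' : j + μ j = j' + μ j' := he
    clear he
    rename' he' => he
    by_contra hne
    rcases lt_or_gt_of_ne hne with h | h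
    · have := encode_strictmono hμ h (by omega); omega
    · have := encode_strictmono hμ h (by omega); omega
  rw [hcard, sub_nonneg]
  have hmain : t ≤ (m+1) * A.card := by
    rcases Nat.lt_or_ge A.card (n+1) with hc | hc
    · set j0 := A.card with hj0
      have hj0n : j0 ≤ n := by omega
      have hj0A : j0 ∉ A := by
        intro hj0A
        have hsub : Finset.range (j0+1) ⊆ A := by
          intro j hj
          rw [Finset.mem_range] at hj
          rw [hA, Finset.mem_filter, Finset.mem_range]
          have hmono := mset_mono hμ j0 hj0n j (by omega)
          rw [hA, Finset.mem_filter] at hj0A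
          exact ⟨by omega, by omega⟩
        have hcc := Finset.card_le_card hsub
        rw [Finset.card_range] at hcc
        omega
      have hj0pos : 1 ≤ j0 := by
        by_contra h
        have h0 : j0 = 0 := by omega
        apply hj0A
        rw [h0, hA, Finset.mem_filter, Finset.mem_range]
        refine ⟨by omega, ?_⟩
        rw [hμ.1]
        omega
      have ht0 : t ≤ j0 + μ j0 := by
        by_contra h
        apply hj0A
        rw [hA, Finset.mem_filter, Finset.mem_range]
        exact ⟨by omega, by omega⟩
      have hb := mset_bound hμ hj0n
      have he : (m+1)*j0 = m*j0+j0 := by ring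
      omega
    · have hcc : (m+1)*(n+1) ≤ (m+1)*A.card := Nat.mul_le_mul_left _ hc
      omega
  exact_mod_cast hmain

lemma good_decode {S : Finset ℕ} (hS : S ⊆ Finset.range ((m+1)*(n+1)+1))
    (hcard : S.card = n+1) (hg : goodAt ((m+1)*(n+1)+1) S m 0) :
    ∃ μ ∈ MSet n m, encode n μ = S := by
  have hgood : ∀ t, 1 ≤ t → t < (m+1)*(n+1)+1 → t ≤ (m+1) * ((S.filter (· < t)).card) := by
    intro t h1 h2
    have h3 := hg t h1 h2
    rw [show Finset.Ico 0 (0+t) = Finset.range t by rw [Nat.zero_add, Finset.range_eq_Ico]] at h3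
    rw [sum_wt_prefix hS (by omega)] at h3
    have h4 : (t:ℤ) ≤ (m+1) * ((S.filter (· < t)).card : ℤ) := by omega
    exact_mod_cast h4
  set f := S.orderEmbOfFin hcard with hf
  have hmem : ∀ i, f i ∈ S := fun i => Finset.orderEmbOfFin_mem S hcard i
  have hmono : StrictMono f := (S.orderEmbOfFin hcard).strictMono
  have hfl : ∀ k (hk : k < n+1), k ≤ f ⟨k, hk⟩ := by
    intro k
    induction k with
    | zero => intro hk; exact Nat.zero_le _
    | succ k ih =>
      intro hk
      have h1 := ih (by omega)
      have h2 : f ⟨k, by omega⟩ < f ⟨k+1, hk⟩ := hmono (by rw [Fin.mk_lt_mk]; omega)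
      omega
  have h0S : (0:ℕ) ∈ S := by
    have h3 := hgood 1 le_rfl (by have hp := Nat.mul_pos (show 0 < m+1 by omega) (show 0 < n+1 by omega); omega)
    have h4 : (S.filter (· < 1)).Nonempty := by
      by_contra h
      rw [Finset.not_nonempty_iff_eq_empty] at h
      rw [h] at h3
      simp at h3
    obtain ⟨x, hx⟩ := h4
    rw [Finset.mem_filter] at hx
    have hx0 : x = 0 := by omega
    rw [← hx0]
    exact hx.1
  have hf0 : f ⟨0, by omega⟩ = 0 := by
    have h5 : (0:ℕ) ∈ Set.range f := by
      rw [hf, Finset.range_orderEmbOfFin]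
      exact_mod_cast h0S
    obtain ⟨i, hi⟩ := h5
    have h1 : f ⟨0, by omega⟩ ≤ f i := hmono.monotone (by
      rw [Fin.le_def]
      exact Nat.zero_le _)
    rw [hi] at h1
    omega
  have hfb : ∀ (j:ℕ) (hj : j < n+1), f ⟨j, hj⟩ ≤ (m+1)*j := by
    intro j hj
    by_contra hcon
    push_neg at hcon
    have htL : (m+1)*j+1 < (m+1)*(n+1)+1 := by
      have hcc : (m+1)*j ≤ (m+1)*n := Nat.mul_le_mul_left _ (by omega)
      have e : (m+1)*(n+1) = (m+1)*n + (m+1) := by ring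
      omega
    have hgt := hgood ((m+1)*j+1) (by omega) htL
    have hsub2 : S.filter (· < (m+1)*j+1) ⊆
        (Finset.range j).image (fun k => if h : k < n+1 then f ⟨k, h⟩ else 0) := by
      intro x hx
      rw [Finset.mem_filter] at hx
      have h5 : x ∈ Set.range f := by
        rw [hf, Finset.range_orderEmbOfFin]
        exact_mod_cast hx.1
      obtain ⟨i, hi⟩ := h5
      have hij : (i:ℕ) < j := by
        by_contra hij
        push_neg at hij
        have h6 : f ⟨j, hj⟩ ≤ f i := hmono.monotone (by rw [Fin.le_def]; exact hij)
        omega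
      rw [Finset.mem_image]
      refine ⟨(i:ℕ), Finset.mem_range.mpr hij, ?_⟩
      rw [dif_pos i.isLt]
      rw [Fin.eta]
      exact hi
    have hcle : (S.filter (· < (m+1)*j+1)).card ≤ j := by
      calc (S.filter (· < (m+1)*j+1)).card
          ≤ ((Finset.range j).image (fun k => if h : k < n+1 then f ⟨k, h⟩ else 0)).card :=
            Finset.card_le_card hsub2
        _ ≤ (Finset.range j).card := Finset.card_image_le
        _ = j := Finset.card_range j
    have h7 : (m+1) * (S.filter (· < (m+1)*j+1)).card ≤ (m+1)*j := Nat.mul_le_mul_left _ hcle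
    omega
  refine ⟨fun j => if h : j < n+1 then f ⟨j, h⟩ - j else 0, ⟨?_, ?_, ?_⟩, ?_⟩
  · show (if h : (0:ℕ) < n+1 then f ⟨0, h⟩ - 0 else 0) = 0
    rw [dif_pos (by omega : (0:ℕ) < n+1), Nat.sub_zero]
    exact hf0
  · intro j hj
    show (if h : j < n+1 then f ⟨j, h⟩ - j else 0) = 0
    rw [dif_neg (by omega)]
  · intro j h1 h2
    have hjlt : j < n+1 := by omega
    have hj1lt : j - 1 < n+1 := by omega
    show (if h : j-1 < n+1 then f ⟨j-1, h⟩ - (j-1) else 0) ≤ (if h : j < n+1 then f ⟨j, h⟩ - j else 0)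
      ∧ (if h : j < n+1 then f ⟨j, h⟩ - j else 0) ≤ m * j
    rw [dif_pos hjlt, dif_pos hj1lt]
    constructor
    · have hs : f ⟨j-1, hj1lt⟩ < f ⟨j, hjlt⟩ := hmono (by rw [Fin.mk_lt_mk]; omega)
      have hge := hfl (j-1) hj1lt
      omega
    · have hb := hfb j hjlt
      have hge := hfl j hjlt
      have he2 : (m+1)*j = m*j + j := by ring
      omega
  · have hsub3 : encode n (fun j => if h : j < n+1 then f ⟨j,h⟩ - j else 0) ⊆ S := by
      intro x hx
      rw [encode, Finset.mem_image] at hx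
      obtain ⟨j, hj, rfl⟩ := hx
      rw [Finset.mem_range] at hj
      show j + (if h : j < n+1 then f ⟨j, h⟩ - j else 0) ∈ S
      rw [dif_pos hj]
      have hge := hfl j hj
      rw [show j + (f ⟨j, hj⟩ - j) = f ⟨j, hj⟩ by omega]
      exact hmem _
    apply Finset.eq_of_subset_of_card_le hsub3
    rw [hcard]
    have hce : (encode n (fun j => if h : j < n+1 then f ⟨j,h⟩ - j else 0)).card = n+1 := by
      rw [encode, Finset.card_image_of_injOn, Finset.card_range]
      intro j hj j' hj' he
      rw [Finset.mem_coe, Finset.mem_range] at hj hj'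
      have he2 : j + (if h : j < n+1 then f ⟨j, h⟩ - j else 0) = j' + (if h : j' < n+1 then f ⟨j', h⟩ - j' else 0) := he
      clear he
      rename' he2 => he
      rw [dif_pos hj, dif_pos hj'] at he
      have g1 := hfl j hj
      have g2 := hfl j' hj'
      rw [show j + (f ⟨j,hj⟩ - j) = f ⟨j,hj⟩ by omega,
        show j' + (f ⟨j',hj'⟩ - j') = f ⟨j',hj'⟩ by omega] at he
      by_contra hne
      rcases lt_or_gt_of_ne hne with h | h
      · have := hmono (show (⟨j,hj⟩ : Fin (n+1)) < ⟨j',hj'⟩ by rw [Fin.mk_lt_mk]; exact h)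
        omega
      · have := hmono (show (⟨j',hj'⟩ : Fin (n+1)) < ⟨j,hj⟩ by rw [Fin.mk_lt_mk]; exact h)
        omega
    omega

lemma encode_injOn : Set.InjOn (encode n) (MSet n m) := by
  intro μ hμ μ' hμ' he
  have hc : (encode n μ).card = n+1 := encode_card hμ
  have g : ∀ x : Fin (n+1), (fun i : Fin (n+1) => (i:ℕ) + μ i) x ∈ encode n μ := by
    intro x
    rw [encode, Finset.mem_image]
    exact ⟨x, Finset.mem_range.mpr x.isLt, rfl⟩
  have gmono : StrictMono (fun i : Fin (n+1) => (i:ℕ) + μ i) := by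
    intro x y hxy
    exact encode_strictmono hμ (by exact hxy) (by omega)
  have g' : ∀ x : Fin (n+1), (fun i : Fin (n+1) => (i:ℕ) + μ' i) x ∈ encode n μ := by
    intro x
    rw [he, encode, Finset.mem_image]
    exact ⟨x, Finset.mem_range.mpr x.isLt, rfl⟩
  have gmono' : StrictMono (fun i : Fin (n+1) => (i:ℕ) + μ' i) := by
    intro x y hxy
    exact encode_strictmono hμ' (by exact hxy) (by omega)
  have e1 := Finset.orderEmbOfFin_unique hc g gmono
  have e2 := Finset.orderEmbOfFin_unique hc g' gmono'
  funext j
  by_cases hj : j ≤ n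
  · have h3 := congrFun (e1.trans e2.symm) ⟨j, by omega⟩
    simp only at h3
    omega
  · rw [hμ.2.1 j (by omega), hμ'.2.1 j (by omega)]

end Encode

theorem mset_card (m n : ℕ) :
    (MSet n m).ncard = (((Finset.range ((m+1)*(n+1)+1)).powersetCard (n+1)).filter
        (fun S => goodAt ((m+1)*(n+1)+1) S m 0)).card := by
  have h1 : encode n '' (MSet n m)
      = ↑(((Finset.range ((m+1)*(n+1)+1)).powersetCard (n+1)).filter
        (fun S => goodAt ((m+1)*(n+1)+1) S m 0)) := by
    ext S
    constructor
    · rintro ⟨μ, hμ, rfl⟩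
      simp only [Finset.mem_coe, Finset.mem_filter, Finset.mem_powersetCard]
      exact ⟨⟨encode_subset hμ, encode_card hμ⟩, encode_good hμ⟩
    · intro hS
      simp only [Finset.mem_coe, Finset.mem_filter, Finset.mem_powersetCard] at hS
      obtain ⟨μ, hμ, hen⟩ := good_decode hS.1.1 hS.1.2 hS.2
      exact ⟨μ, hμ, hen⟩
  rw [← Set.ncard_coe_finset, ← h1, Set.ncard_image_of_injOn encode_injOn]

end ShiFC


/-- The number of type-A Shi tableaux of size `(n,m)` is the Fuss–Catalan number
`(1/(m(n+1)+1)) · C((m+1)(n+1), n+1)`:  `(m(n+1)+1)` times the number of tableaux equals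
`C((m+1)(n+1), n+1)`. -/
theorem shi_tableaux_fuss_catalan_count (n m : ℕ) (hn : 1 ≤ n) (hm : 1 ≤ m) :
    (m * (n + 1) + 1) * (ShiSet n m).ncard =
      Nat.choose ((m + 1) * (n + 1)) (n + 1) := by
  obtain ⟨hinj, him⟩ := ShiFC.main_bij m n
  have h1 : (ShiSet n m).ncard = (ShiFC.MSet n m).ncard := by
    rw [← him, Set.ncard_image_of_injOn hinj]
  rw [h1, ShiFC.mset_card]
  have hcy := ShiFC.cycle_card m (n+1) (by omega)
  set X := (((Finset.range ((m+1)*(n+1)+1)).powersetCard (n+1)).filter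
      (fun S => ShiFC.goodAt ((m+1)*(n+1)+1) S m 0)).card with hX
  set N := (m+1)*(n+1) with hN
  -- hcy : (N+1) * X = (N+1).choose (n+1)
  have hpas : (N+1).choose (n+1) = N.choose n + N.choose (n+1) := Nat.choose_succ_succ' N n
  have habs : (N+1) * N.choose n = (N+1).choose (n+1) * (n+1) := Nat.add_one_mul_choose_eq N n
  have hsplit : N + 1 = (n+1) + (m*(n+1)+1) := by
    rw [hN]
    ring
  apply Nat.eq_of_mul_eq_mul_left (show 0 < N+1 by omega)
  -- goal : (N+1) * ((m*(n+1)+1) * X) = (N+1) * N.choose (n+1)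
  have key : (m*(n+1)+1) * ((N+1).choose (n+1)) = (N+1) * N.choose (n+1) := by
    have e2 : (N+1) * ((N+1).choose (n+1))
        = (n+1) * ((N+1).choose (n+1)) + (m*(n+1)+1) * ((N+1).choose (n+1)) := by
      rw [← Nat.add_mul, ← hsplit]
    have e3 : (N+1) * ((N+1).choose (n+1))
        = (N+1).choose (n+1) * (n+1) + (N+1) * N.choose (n+1) := by
      calc (N+1) * ((N+1).choose (n+1)) = (N+1) * (N.choose n + N.choose (n+1)) := by rw [← hpas]
        _ = (N+1) * N.choose n + (N+1) * N.choose (n+1) := by ring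
        _ = (N+1).choose (n+1) * (n+1) + (N+1) * N.choose (n+1) := by rw [habs]
    have e4 : (n+1) * ((N+1).choose (n+1)) = (N+1).choose (n+1) * (n+1) := by ring
    omega
  calc (N+1) * ((m*(n+1)+1) * X) = (m*(n+1)+1) * ((N+1) * X) := by ring
    _ = (m*(n+1)+1) * ((N+1).choose (n+1)) := by rw [hcy]
    _ = (N+1) * N.choose (n+1) := key
end
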